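/- arXiv:2512.04807 — 5 statements merged into one kernel-verified Lean document; each statement's English description precedes it below -/
import Mathlib

section
/- Let V be a finite set and let (w_n) be a sequence of edge conductances on V (symmetric functions w_n : V × V → [0,∞) vanishing on the diagonal) such that each network (V, w_n) is connected, and let R_n : V × V → [0,∞) be the associated effective resistance metrics. Suppose that R_n converges pointwise to a function R : V × V → [0,∞) with R(x,y) > 0 for all x ≠ y. Then there exists an edge conductance function w : V × V → [0,∞) such that w_n converges pointwise to w and R is the effective resistance associated with (V, w). -/
/-! Ground the network at a vertex `o`. The grounded Laplacian `L` (the Laplacian with the row and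
column of `o` removed) is positive definite when the network is connected, its quadratic form is the
energy of potentials vanishing at `o`, and minimizing that quadratic form under a linear constraint
gives `R(x,y) = vᵀ L⁻¹ v` with `v = eₓ - e_y`. Polarization then reads the Green function off the
resistances, `L⁻¹(a,b) = (R(a,o) + R(b,o) - R(a,b)) / 2`, so the Green functions `Lₙ⁻¹` converge.
Since `wₙ(x,y) ≤ 1 / Rₙ(x,y)` and `R(x,y) > 0`, the Laplacians `Lₙ` stay in a compact set, which
forces the limit Green function to be invertible. Hence the `Lₙ`, and with them the conductances,
converge, and the Green function formula passes to the limit. -/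

open scoped Classical

open Filter

/-- An edge conductance function on a set `V`: nonnegative, symmetric, vanishing on the
diagonal. -/
def IsConductance {V : Type*} (w : V → V → ℝ) : Prop :=
  (∀ x y, 0 ≤ w x y) ∧ (∀ x y, w x y = w y x) ∧ (∀ x, w x x = 0)

/-- The energy of a function `f : V → ℝ` with respect to edge conductances `w`. -/
noncomputable def energy {V : Type*} [Fintype V] (w : V → V → ℝ) (f : V → ℝ) : ℝ :=
  (1 / 2) * ∑ x, ∑ y, w x y * (f x - f y) ^ 2

/-- The network `(V, w)` is connected: any two vertices are joined by a chain of edges with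
positive conductance. -/
def NetworkConnected {V : Type*} (w : V → V → ℝ) : Prop :=
  ∀ x y : V, Relation.ReflTransGen (fun a b => 0 < w a b) x y

/-- The effective resistance associated with the network `(V, w)`. -/
noncomputable def effRes {V : Type*} [Fintype V] (w : V → V → ℝ) (x y : V) : ℝ :=
  if x = y then 0
  else (sInf {e : ℝ | ∃ f : V → ℝ, f x = 1 ∧ f y = 0 ∧ energy w f = e})⁻¹

open Matrix Topology

section SubtypeNe

variable {V R : Type*} [Fintype V] [DecidableEq V] [NonUnitalNonAssocSemiring R] {o : V}

lemma dotProduct_comp_val_of_apply_eq_zero (u f : V → R) (hf : f o = 0) :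
    (fun a : {x // x ≠ o} => u a) ⬝ᵥ (fun a => f a) = u ⬝ᵥ f := by
  simp [dotProduct, Fintype.sum_eq_add_sum_subtype_ne (fun x => u x * f x) o, hf]

lemma submatrix_val_mulVec_of_apply_eq_zero (A : Matrix V V R) (f : V → R) (hf : f o = 0) :
    A.submatrix Subtype.val Subtype.val *ᵥ (fun a : {x // x ≠ o} => f a) =
      fun a : {x // x ≠ o} => (A *ᵥ f) a := by
  ext a
  simp [mulVec, dotProduct, Fintype.sum_eq_add_sum_subtype_ne (fun x => A a x * f x) o, hf]

end SubtypeNe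

lemma extend_val_apply_self {V R : Type*} [Zero R] {o : V} (g : {x // x ≠ o} → R) :
    Function.extend Subtype.val g 0 o = 0 :=
  Function.extend_apply' _ _ _ fun ⟨a, ha⟩ => a.2 ha

lemma extend_val_comp {V R : Type*} [Zero R] {o : V} (g : {x // x ≠ o} → R) :
    (fun a : {x // x ≠ o} => Function.extend Subtype.val g 0 a) = g :=
  Function.extend_comp Subtype.val_injective g 0

section Energy

variable {V : Type*} [Fintype V]

lemma energy_nonneg {w : V → V → ℝ} (hw : IsConductance w) (f : V → ℝ) : 0 ≤ energy w f :=
  mul_nonneg (by norm_num) <| Finset.sum_nonneg fun x _ => Finset.sum_nonneg fun y _ =>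
    mul_nonneg (hw.1 x y) (sq_nonneg _)

lemma energy_sub_const (w : V → V → ℝ) (f : V → ℝ) (c : ℝ) :
    energy w (fun z => f z - c) = energy w f := by
  simp only [energy, sub_sub_sub_cancel_right]

lemma conductance_le_energy {w : V → V → ℝ} (hw : IsConductance w) {x y : V} (hxy : x ≠ y)
    {f : V → ℝ} (hfx : f x = 1) (hfy : f y = 0) : w x y ≤ energy w f := by
  set T : V → V → ℝ := fun a b => w a b * (f a - f b) ^ 2
  have hT : ∀ a b, 0 ≤ T a b := fun a b => mul_nonneg (hw.1 a b) (sq_nonneg _)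
  have hrows : ∑ b, T x b + ∑ b, T y b ≤ ∑ a, ∑ b, T a b := by
    rw [← Finset.sum_pair (f := fun a => ∑ b, T a b) hxy]
    exact Finset.sum_le_univ_sum_of_nonneg fun a => Finset.sum_nonneg fun b _ => hT a b
  have hxy' : T x y ≤ ∑ b, T x b := Finset.single_le_sum (fun b _ => hT x b) (Finset.mem_univ y)
  have hyx' : T y x ≤ ∑ b, T y b := Finset.single_le_sum (fun b _ => hT y b) (Finset.mem_univ x)
  have hTxy : T x y = w x y := by simp [T, hfx, hfy]
  have hTyx : T y x = w x y := by simp [T, hfx, hfy, hw.2.1 y x]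
  simp only [energy]
  linarith

lemma eq_of_energy_eq_zero {w : V → V → ℝ} (hw : IsConductance w) {f : V → ℝ}
    (hf : energy w f = 0) {x y : V} (hxy : Relation.ReflTransGen (fun a b => 0 < w a b) x y) :
    f x = f y := by
  have hterm : ∀ a b, w a b * (f a - f b) ^ 2 = 0 := by
    have hsum : ∑ a, ∑ b, w a b * (f a - f b) ^ 2 = 0 := by
      simp only [energy] at hf; linarith
    intro a b
    have hnn : ∀ a b, 0 ≤ w a b * (f a - f b) ^ 2 := fun a b => mul_nonneg (hw.1 a b) (sq_nonneg _)
    rw [Finset.sum_eq_zero_iff_of_nonneg fun a _ => Finset.sum_nonneg fun b _ => hnn a b] at hsum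
    exact (Finset.sum_eq_zero_iff_of_nonneg fun b _ => hnn a b).1 (hsum a (Finset.mem_univ a)) b
      (Finset.mem_univ b)
  induction hxy with
  | refl => rfl
  | @tail b c _ hbc ih =>
    rw [ih]
    have := hterm b c
    rw [mul_eq_zero, sq_eq_zero_iff, sub_eq_zero] at this
    exact this.resolve_left hbc.ne'

end Energy

section Laplacian

variable {V : Type*} [Fintype V] [DecidableEq V]

noncomputable def laplacian (w : V → V → ℝ) : Matrix V V ℝ :=
  diagonal (fun x => ∑ y, w x y) - of w

noncomputable def groundedLaplacian (w : V → V → ℝ) (o : V) :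
    Matrix {x // x ≠ o} {x // x ≠ o} ℝ :=
  (laplacian w).submatrix Subtype.val Subtype.val

lemma laplacian_apply_of_ne (w : V → V → ℝ) {x y : V} (h : x ≠ y) :
    laplacian w x y = -w x y := by
  simp [laplacian, diagonal_apply_ne _ h]

lemma abs_laplacian_apply_le {w : V → V → ℝ} (hw : IsConductance w) (x y : V) :
    |laplacian w x y| ≤ ∑ z, w x z := by
  rcases eq_or_ne x y with rfl | h
  · simp [laplacian, hw.2.2, abs_of_nonneg (Finset.sum_nonneg fun z _ => hw.1 x z)]
  · rw [laplacian_apply_of_ne w h, abs_neg, abs_of_nonneg (hw.1 x y)]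
    exact Finset.single_le_sum (fun z _ => hw.1 x z) (Finset.mem_univ y)

lemma isHermitian_laplacian {w : V → V → ℝ} (hs : ∀ x y, w x y = w y x) :
    (laplacian w).IsHermitian :=
  IsHermitian.ext fun x y => by
    rcases eq_or_ne x y with rfl | h
    · rfl
    · simp [laplacian_apply_of_ne w h, laplacian_apply_of_ne w h.symm, hs]

lemma dotProduct_laplacian_mulVec {w : V → V → ℝ} (hs : ∀ x y, w x y = w y x) (f : V → ℝ) :
    f ⬝ᵥ (laplacian w *ᵥ f) = energy w f := by
  have hanti : ∑ x, ∑ y, w x y * (f x ^ 2 - f y ^ 2) = 0 := by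
    have h : ∑ x, ∑ y, w x y * (f x ^ 2 - f y ^ 2) = ∑ x, ∑ y, -(w x y * (f x ^ 2 - f y ^ 2)) := by
      rw [Finset.sum_comm]
      refine Finset.sum_congr rfl fun a _ => Finset.sum_congr rfl fun b _ => ?_
      rw [hs]
      ring
    simp only [Finset.sum_neg_distrib] at h
    linarith
  calc f ⬝ᵥ (laplacian w *ᵥ f) = ∑ x, ∑ y, w x y * f x * (f x - f y) := by
        simp only [dotProduct, laplacian, sub_mulVec, mulVec_diagonal, Pi.sub_apply]
        refine Finset.sum_congr rfl fun x _ => ?_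
        simp only [mulVec, dotProduct, of_apply, Finset.sum_mul, Finset.mul_sum,
          ← Finset.sum_sub_distrib]
        exact Finset.sum_congr rfl fun y _ => by ring
    _ = ∑ x, ∑ y, (1 / 2 * (w x y * (f x - f y) ^ 2) + 1 / 2 * (w x y * (f x ^ 2 - f y ^ 2))) :=
        by congr! 2; ring
    _ = energy w f := by
        simp only [Finset.sum_add_distrib, ← Finset.mul_sum, hanti, energy]; ring

lemma dotProduct_groundedLaplacian_mulVec {w : V → V → ℝ} (hs : ∀ x y, w x y = w y x) {o : V}
    {f : V → ℝ} (hf : f o = 0) :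
    (fun a : {x // x ≠ o} => f a) ⬝ᵥ (groundedLaplacian w o *ᵥ fun a => f a) = energy w f := by
  rw [groundedLaplacian, submatrix_val_mulVec_of_apply_eq_zero _ _ hf, dotProduct_comm,
    dotProduct_comp_val_of_apply_eq_zero _ _ hf, dotProduct_comm, dotProduct_laplacian_mulVec hs]

lemma dotProduct_groundedLaplacian_mulVec_eq_energy_extend {w : V → V → ℝ}
    (hs : ∀ x y, w x y = w y x) {o : V} (g : {x // x ≠ o} → ℝ) :
    g ⬝ᵥ (groundedLaplacian w o *ᵥ g) = energy w (Function.extend Subtype.val g 0) := by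
  simpa only [extend_val_comp] using
    dotProduct_groundedLaplacian_mulVec hs (extend_val_apply_self g)

lemma posSemidef_groundedLaplacian {w : V → V → ℝ} (hw : IsConductance w) (o : V) :
    (groundedLaplacian w o).PosSemidef :=
  .of_dotProduct_mulVec_nonneg ((isHermitian_laplacian hw.2.1).submatrix _) fun g => by
    rw [star_trivial, dotProduct_groundedLaplacian_mulVec_eq_energy_extend hw.2.1]
    exact energy_nonneg hw _

lemma posDef_groundedLaplacian {w : V → V → ℝ} (hw : IsConductance w) (hc : NetworkConnected w)
    (o : V) : (groundedLaplacian w o).PosDef := by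
  refine .of_dotProduct_mulVec_pos ((isHermitian_laplacian hw.2.1).submatrix _) fun g hg => ?_
  rw [star_trivial, dotProduct_groundedLaplacian_mulVec_eq_energy_extend hw.2.1]
  refine (energy_nonneg hw _).lt_of_ne fun h0 => hg ?_
  -- a potential of zero energy is constant on the connected network, and vanishes at `o`
  rw [← extend_val_comp g]
  funext a
  rw [eq_of_energy_eq_zero hw h0.symm (hc a o), extend_val_apply_self]
  rfl

lemma continuous_groundedLaplacian (o : V) :
    Continuous fun w : V → V → ℝ => groundedLaplacian w o := by
  unfold groundedLaplacian laplacian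
  fun_prop

lemma sum_groundedLaplacian_apply (w : V → V → ℝ) {o : V} (a : {x // x ≠ o}) :
    ∑ b, groundedLaplacian w o a b = w a o := by
  simp [groundedLaplacian, laplacian, Finset.sum_sub_distrib, diagonal_apply, Subtype.val_inj,
    Fintype.sum_eq_add_sum_subtype_ne (w a) o]

end Laplacian

lemma Matrix.PosDef.isLeast_dotProduct_mulVec {ι : Type*} [Fintype ι] [DecidableEq ι]
    {A : Matrix ι ι ℝ} (hA : A.PosDef) {v : ι → ℝ} (hv : v ≠ 0) :
    IsLeast {e | ∃ g, v ⬝ᵥ g = 1 ∧ g ⬝ᵥ (A *ᵥ g) = e} (v ⬝ᵥ (A⁻¹ *ᵥ v))⁻¹ := by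
  set u := A⁻¹ *ᵥ v
  set m := v ⬝ᵥ u
  have hAu : A *ᵥ u = v := by
    rw [mulVec_mulVec, mul_nonsing_inv _ ((isUnit_iff_isUnit_det A).1 hA.isUnit), one_mulVec]
  have hm : 0 < m := by simpa only [star_trivial] using hA.inv.dotProduct_mulVec_pos hv
  have hsymm : ∀ g h : ι → ℝ, g ⬝ᵥ (A *ᵥ h) = h ⬝ᵥ (A *ᵥ g) := fun g h => by
    rw [dotProduct_mulVec, ← mulVec_transpose, ← conjTranspose_eq_transpose_of_trivial,
      hA.isHermitian.eq, dotProduct_comm]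
  refine ⟨⟨m⁻¹ • u, ?_, ?_⟩, ?_⟩
  · rw [dotProduct_smul, smul_eq_mul, inv_mul_cancel₀ hm.ne']
  · rw [mulVec_smul, hAu, dotProduct_smul, smul_dotProduct, dotProduct_comm u v]
    change m⁻¹ * (m⁻¹ * m) = m⁻¹
    field_simp
  · rintro _ ⟨g, hg, rfl⟩
    -- positivity of the quadratic form at `g - m⁻¹ • u`, which is `A`-orthogonal to `u`
    have h := hA.posSemidef.dotProduct_mulVec_nonneg (g - m⁻¹ • u)
    rw [star_trivial, mulVec_sub, mulVec_smul, hAu, dotProduct_sub, sub_dotProduct, sub_dotProduct,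
      smul_dotProduct, smul_dotProduct, dotProduct_smul, hsymm u g, hAu, dotProduct_comm g v, hg,
      dotProduct_smul, dotProduct_comm u v, smul_eq_mul, smul_eq_mul, smul_eq_mul,
      inv_mul_cancel₀ hm.ne'] at h
    linarith

section GroundedSource

variable {V : Type*} [DecidableEq V]

/-- `eₓ - e_y` restricted to the non-grounded vertices: the unit current from `x` to `y`. -/
noncomputable def groundedSource (o x y : V) : {z // z ≠ o} → ℝ :=
  fun a => (Pi.single x 1 - Pi.single y 1 : V → ℝ) a

lemma groundedSource_self (o x : V) : groundedSource o x x = 0 := by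
  ext a
  simp [groundedSource]

lemma groundedSource_ne_zero {o x y : V} (hxy : x ≠ y) : groundedSource o x y ≠ 0 := by
  intro h
  by_cases hx : x = o
  · subst hx
    simpa [groundedSource, Pi.single_apply, hxy] using congrFun h ⟨y, hxy.symm⟩
  · simpa [groundedSource, Pi.single_apply, hxy] using congrFun h ⟨x, hx⟩

lemma groundedSource_val_self {o : V} (a : {z // z ≠ o}) :
    groundedSource o a o = Pi.single a 1 := by
  ext b
  simp [groundedSource, Pi.single_apply, Subtype.ext_iff, b.2]

lemma groundedSource_val_val {o : V} (a b : {z // z ≠ o}) :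
    groundedSource o a b = Pi.single a 1 - Pi.single b 1 := by
  ext c
  simp [groundedSource, Pi.single_apply, Subtype.ext_iff]

end GroundedSource

section EffectiveResistance

variable {V : Type*} [Fintype V] [DecidableEq V]

lemma groundedSource_dotProduct {o : V} (x y : V) {f : V → ℝ} (hf : f o = 0) :
    groundedSource o x y ⬝ᵥ (fun a => f a) = f x - f y := by
  refine (dotProduct_comp_val_of_apply_eq_zero (Pi.single x 1 - Pi.single y 1) f hf).trans ?_
  rw [sub_dotProduct, single_dotProduct, single_dotProduct, one_mul, one_mul]

lemma setOf_energy_eq_setOf_groundedLaplacian {w : V → V → ℝ} (hs : ∀ x y, w x y = w y x)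
    (o x y : V) :
    {e | ∃ f : V → ℝ, f x = 1 ∧ f y = 0 ∧ energy w f = e} =
      {e | ∃ g, groundedSource o x y ⬝ᵥ g = 1 ∧ g ⬝ᵥ (groundedLaplacian w o *ᵥ g) = e} := by
  ext e
  constructor
  · rintro ⟨f, hfx, hfy, rfl⟩
    have hf : f o - f o = 0 := sub_self _
    refine ⟨fun a => f a - f o, ?_, ?_⟩
    · rw [groundedSource_dotProduct x y (f := fun z => f z - f o) hf, hfx, hfy]
      ring
    · rw [dotProduct_groundedLaplacian_mulVec hs (f := fun z => f z - f o) hf, energy_sub_const]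
  · rintro ⟨g, hg, rfl⟩
    have hF := extend_val_apply_self g
    have hxy := groundedSource_dotProduct (o := o) x y hF
    rw [extend_val_comp, hg] at hxy
    refine ⟨fun z => Function.extend Subtype.val g 0 z - Function.extend Subtype.val g 0 y,
      by linarith, sub_self _, ?_⟩
    rw [energy_sub_const, dotProduct_groundedLaplacian_mulVec_eq_energy_extend hs]

theorem effRes_eq_dotProduct_inv_groundedLaplacian_mulVec {w : V → V → ℝ} (hw : IsConductance w)
    {o : V} (hpd : (groundedLaplacian w o).PosDef) (x y : V) :
    effRes w x y =
      groundedSource o x y ⬝ᵥ ((groundedLaplacian w o)⁻¹ *ᵥ groundedSource o x y) := by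
  rcases eq_or_ne x y with rfl | hxy
  · simp [effRes, groundedSource_self]
  · rw [effRes, if_neg hxy, setOf_energy_eq_setOf_groundedLaplacian hw.2.1 o,
      (hpd.isLeast_dotProduct_mulVec (groundedSource_ne_zero hxy)).csInf_eq, inv_inv]

theorem inv_groundedLaplacian_apply {w : V → V → ℝ} (hw : IsConductance w) {o : V}
    (hpd : (groundedLaplacian w o).PosDef) (a b : {z // z ≠ o}) :
    (groundedLaplacian w o)⁻¹ a b = (effRes w a o + effRes w b o - effRes w a b) / 2 := by
  have hsymm := hpd.inv.isHermitian.apply a b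
  rw [star_trivial] at hsymm
  simp only [effRes_eq_dotProduct_inv_groundedLaplacian_mulVec hw hpd, groundedSource_val_self,
    groundedSource_val_val, mulVec_sub, mulVec_single_one, dotProduct_sub, sub_dotProduct,
    single_dotProduct, one_mul, col_apply]
  linarith

theorem conductance_le_inv_effRes {w : V → V → ℝ} (hw : IsConductance w) {x y : V} (hxy : x ≠ y) :
    w x y ≤ (effRes w x y)⁻¹ := by
  rw [effRes, if_neg hxy, inv_inv]
  refine le_csInf ⟨_, Pi.single x 1, by simp, Pi.single_eq_of_ne hxy.symm _, rfl⟩ ?_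
  rintro _ ⟨f, hfx, hfy, rfl⟩
  exact conductance_le_energy hw hxy hfx hfy

end EffectiveResistance

section MatrixLimits

variable {ι : Type*} [Fintype ι] [DecidableEq ι] {𝕜 : Type*} [NormedField 𝕜]

lemma Matrix.isCompact_setOf_abs_apply_le {m n : Type*} (B : m → n → ℝ) :
    IsCompact {M : Matrix m n ℝ | ∀ i j, |M i j| ≤ B i j} := by
  have h : {M : Matrix m n ℝ | ∀ i j, |M i j| ≤ B i j} =
      Set.univ.pi fun i => Set.univ.pi fun j => Set.Icc (-B i j) (B i j) := by
    ext M
    exact ⟨fun h i _ j _ => abs_le.1 (h i j), fun h i j => abs_le.2 (h i trivial j trivial)⟩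
  rw [h]
  exact isCompact_univ_pi fun i => isCompact_univ_pi fun j => isCompact_Icc

lemma Matrix.isUnit_of_tendsto_of_inv_mem {A : ℕ → Matrix ι ι 𝕜} {A₀ : Matrix ι ι 𝕜}
    {K : Set (Matrix ι ι 𝕜)} (hK : IsCompact K) (hA : ∀ n, IsUnit (A n)) (hAK : ∀ n, (A n)⁻¹ ∈ K)
    (hlim : Tendsto A atTop (𝓝 A₀)) : IsUnit A₀ := by
  have : FirstCountableTopology (Matrix ι ι 𝕜) :=
    inferInstanceAs (FirstCountableTopology (ι → ι → 𝕜))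
  obtain ⟨B, -, φ, hφ, hB⟩ := hK.tendsto_subseq hAK
  have hprod : Tendsto (fun k => A (φ k) * (A (φ k))⁻¹) atTop (𝓝 (A₀ * B)) :=
    (hlim.comp hφ.tendsto_atTop).mul hB
  have hone : A₀ * B = 1 := by
    refine tendsto_nhds_unique hprod (tendsto_const_nhds.congr fun k => ?_)
    rw [mul_nonsing_inv _ ((isUnit_iff_isUnit_det _).1 (hA (φ k)))]
  exact (isUnit_iff_isUnit_det _).2 (isUnit_det_of_right_inverse hone)

lemma Filter.Tendsto.matrix_inv {α : Type*} {l : Filter α} {A : α → Matrix ι ι 𝕜}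
    {A₀ : Matrix ι ι 𝕜} (hA : Tendsto A l (𝓝 A₀)) (h : IsUnit A₀) :
    Tendsto (fun n => (A n)⁻¹) l (𝓝 A₀⁻¹) := by
  refine ((continuousAt_matrix_inv A₀ ?_).tendsto).comp hA
  rw [Ring.inverse_eq_inv']
  exact continuousAt_inv₀ ((isUnit_iff_isUnit_det _).1 h).ne_zero

end MatrixLimits

lemma IsConductance.of_tendsto {V : Type*} {w : ℕ → V → V → ℝ} (hw : ∀ n, IsConductance (w n))
    {wl : V → V → ℝ} (hlim : ∀ x y, Tendsto (fun n => w n x y) atTop (𝓝 (wl x y))) :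
    IsConductance wl :=
  ⟨fun x y => ge_of_tendsto' (hlim x y) fun n => (hw n).1 x y,
    fun x y => tendsto_nhds_unique (hlim x y) ((hlim y x).congr fun n => (hw n).2.1 y x),
    fun x => tendsto_nhds_unique (hlim x x) (by simp [(hw _).2.2])⟩

section Limits

variable {V : Type*} [Fintype V] [DecidableEq V] {w : ℕ → V → V → ℝ}

/-- Off-diagonal entries of the grounded Laplacian are the conductances between non-grounded
vertices, and its row sums are the conductances to `o`. -/
lemma exists_tendsto_of_tendsto_groundedLaplacian (hw : ∀ n, IsConductance (w n)) {o : V}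
    {M : Matrix {x // x ≠ o} {x // x ≠ o} ℝ}
    (hM : Tendsto (fun n => groundedLaplacian (w n) o) atTop (𝓝 M)) :
    ∃ wl, IsConductance wl ∧ (∀ x y, Tendsto (fun n => w n x y) atTop (𝓝 (wl x y))) ∧
      groundedLaplacian wl o = M := by
  have hentry (a b) : Tendsto (fun n => groundedLaplacian (w n) o a b) atTop (𝓝 (M a b)) :=
    tendsto_pi_nhds.1 (tendsto_pi_nhds.1 hM a) b
  have hrow (a : {x // x ≠ o}) (y : V) : ∃ l, Tendsto (fun n => w n a y) atTop (𝓝 l) := by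
    by_cases hy : y = o
    · rw [hy]
      exact ⟨_, (tendsto_finsetSum _ fun b _ => hentry a b).congr fun n =>
        sum_groundedLaplacian_apply (w n) a⟩
    by_cases hay : (a : V) = y
    · exact ⟨0, by simp [hay, (hw _).2.2]⟩
    · exact ⟨_, (hentry a ⟨y, hy⟩).neg.congr fun n => by
        simp [groundedLaplacian, laplacian_apply_of_ne _ hay]⟩
  have hconv (x y : V) : ∃ l, Tendsto (fun n => w n x y) atTop (𝓝 l) := by
    by_cases hx : x = o
    · by_cases hy : y = o
      · exact ⟨0, by simp [hx, hy, (hw _).2.2]⟩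
      · obtain ⟨l, hl⟩ := hrow ⟨y, hy⟩ x
        exact ⟨l, hl.congr fun n => (hw n).2.1 y x⟩
    · exact hrow ⟨x, hx⟩ y
  choose wl hwl using hconv
  refine ⟨wl, IsConductance.of_tendsto hw hwl, hwl, tendsto_nhds_unique ?_ hM⟩
  exact ((continuous_groundedLaplacian o).tendsto wl).comp
    (tendsto_pi_nhds.2 fun x => tendsto_pi_nhds.2 (hwl x))

lemma bddAbove_range_conductance (hw : ∀ n, IsConductance (w n)) {R : V → V → ℝ}
    (hlim : ∀ x y, Tendsto (fun n => effRes (w n) x y) atTop (𝓝 (R x y)))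
    (hpos : ∀ x y, x ≠ y → 0 < R x y) (x y : V) : BddAbove (Set.range fun n => w n x y) := by
  rcases eq_or_ne x y with rfl | hxy
  · exact ⟨0, by rintro _ ⟨n, rfl⟩; simp [(hw n).2.2]⟩
  · obtain ⟨C, hC⟩ := ((hlim x y).inv₀ (hpos x y hxy).ne').bddAbove_range
    refine ⟨C, ?_⟩
    rintro _ ⟨n, rfl⟩
    exact (conductance_le_inv_effRes (hw n) hxy).trans (hC ⟨n, rfl⟩)

lemma tendsto_inv_groundedLaplacian (hw : ∀ n, IsConductance (w n))
    (hc : ∀ n, NetworkConnected (w n)) {R : V → V → ℝ}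
    (hlim : ∀ x y, Tendsto (fun n => effRes (w n) x y) atTop (𝓝 (R x y))) (o : V) :
    Tendsto (fun n => (groundedLaplacian (w n) o)⁻¹) atTop
      (𝓝 (of fun a b : {x // x ≠ o} => (R a o + R b o - R a b) / 2)) := by
  refine tendsto_pi_nhds.2 fun a => tendsto_pi_nhds.2 fun b => ?_
  simp_rw [inv_groundedLaplacian_apply (hw _) (posDef_groundedLaplacian (hw _) (hc _) o)]
  exact (((hlim _ _).add (hlim _ _)).sub (hlim _ _)).div_const 2

lemma exists_isCompact_forall_groundedLaplacian_mem (hw : ∀ n, IsConductance (w n))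
    (hbdd : ∀ x y, BddAbove (Set.range fun n => w n x y)) (o : V) :
    ∃ K, IsCompact K ∧ ∀ n, groundedLaplacian (w n) o ∈ K := by
  choose C hC using hbdd
  refine ⟨_, isCompact_setOf_abs_apply_le fun (a _ : {x // x ≠ o}) => ∑ z, C a z, fun n a b => ?_⟩
  exact (abs_laplacian_apply_le (hw n) a b).trans (Finset.sum_le_sum fun z _ => hC a z ⟨n, rfl⟩)

end Limits

theorem effRes_limit_general {V : Type*} [Fintype V] (w : ℕ → V → V → ℝ) (R : V → V → ℝ)
    (hcond : ∀ n, IsConductance (w n))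
    (hconn : ∀ n, NetworkConnected (w n))
    (hlim : ∀ x y, Tendsto (fun n => effRes (w n) x y) atTop (nhds (R x y)))
    (hpos : ∀ x y, x ≠ y → 0 < R x y) :
    ∃ wlim : V → V → ℝ, IsConductance wlim ∧
      (∀ x y, Tendsto (fun n => w n x y) atTop (nhds (wlim x y))) ∧
      (∀ x y, R x y = effRes wlim x y) := by
  rcases isEmpty_or_nonempty V with hV | ⟨⟨o⟩⟩
  · exact ⟨0, ⟨isEmptyElim, isEmptyElim, isEmptyElim⟩, isEmptyElim, isEmptyElim⟩
  set L := fun n => groundedLaplacian (w n) o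
  have hL n : (L n).PosDef := posDef_groundedLaplacian (hcond n) (hconn n) o
  have hLinv n : (L n)⁻¹⁻¹ = L n :=
    nonsing_inv_nonsing_inv _ ((isUnit_iff_isUnit_det _).1 (hL n).isUnit)
  obtain ⟨G, hG⟩ : ∃ G, Tendsto (fun n => (L n)⁻¹) atTop (𝓝 G) :=
    ⟨_, tendsto_inv_groundedLaplacian hcond hconn hlim o⟩
  obtain ⟨K, hK, hLK⟩ := exists_isCompact_forall_groundedLaplacian_mem hcond
    (bddAbove_range_conductance hcond hlim hpos) o
  have hGunit : IsUnit G := isUnit_of_tendsto_of_inv_mem hK (fun n => (hL n).inv.isUnit)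
    (fun n => by rw [hLinv]; exact hLK n) hG
  obtain ⟨wl, hwl, hwlim, hLwl⟩ :=
    exists_tendsto_of_tendsto_groundedLaplacian hcond ((hG.matrix_inv hGunit).congr hLinv)
  have hwlpd : (groundedLaplacian wl o).PosDef :=
    (posSemidef_groundedLaplacian hwl o).posDef_iff_isUnit.2 <|
      hLwl ▸ isUnit_nonsing_inv_iff.2 hGunit
  refine ⟨wl, hwl, hwlim, fun x y => tendsto_nhds_unique (hlim x y) ?_⟩
  -- both resistances are quadratic forms of Green functions, `(L n)⁻¹ → G = (L_wl)⁻¹`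
  simp_rw [effRes_eq_dotProduct_inv_groundedLaplacian_mulVec (hcond _) (hL _),
    effRes_eq_dotProduct_inv_groundedLaplacian_mulVec hwl hwlpd, hLwl,
    nonsing_inv_nonsing_inv _ ((isUnit_iff_isUnit_det _).1 hGunit)]
  exact ((by fun_prop : Continuous fun M : Matrix _ _ ℝ =>
    groundedSource o x y ⬝ᵥ (M *ᵥ groundedSource o x y)).tendsto G).comp hG

/-- If the effective resistances of a sequence of connected networks on a finite vertex set `V`
converge pointwise to a function `R` which is positive off the diagonal, then the conductances
converge pointwise to some conductance function `w`, and `R` is the effective resistance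
associated with `(V, w)`. -/
theorem effRes_limit {V : Type*} [Fintype V] (w : ℕ → V → V → ℝ) (R : V → V → ℝ)
    (hcond : ∀ n, IsConductance (w n))
    (hconn : ∀ n, NetworkConnected (w n))
    (hRnonneg : ∀ x y, 0 ≤ R x y)
    (hlim : ∀ x y, Tendsto (fun n => effRes (w n) x y) atTop (nhds (R x y)))
    (hpos : ∀ x y, x ≠ y → 0 < R x y) :
    ∃ wlim : V → V → ℝ, IsConductance wlim ∧
      (∀ x y, Tendsto (fun n => w n x y) atTop (nhds (wlim x y))) ∧
      (∀ x y, R x y = effRes wlim x y) :=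
  effRes_limit_general w R hcond hconn hlim hpos
end

section
/- Let F₁, F₂ be two nonempty sets with F₁ ∩ F₂ = {z}. For i = 1, 2, let (E_i, 𝓕_i) be a resistance form on F_i with associated resistance metric R_i. Define 𝓕 = {f : F₁ ∪ F₂ → ℝ : f|_{F₁} ∈ 𝓕₁ and f|_{F₂} ∈ 𝓕₂} and E(f,f) = E₁(f|_{F₁}, f|_{F₁}) + E₂(f|_{F₂}, f|_{F₂}). Then (E, 𝓕) is a resistance form on F₁ ∪ F₂, and its associated resistance metric R satisfies: R(x,y) = R₁(x,y) for x, y ∈ F₁; R(x,y) = R₂(x,y) for x, y ∈ F₂; and R(x,y) = R₁(x,z) + R₂(z,y) for x ∈ F₁ and y ∈ F₂. -/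
open scoped Classical

/-- A resistance form `(En, Dom)` on a nonempty set `F` (Kigami).  `Dom` is a linear subspace
of the real-valued functions on `F` containing the constants; `En` is a nonnegative symmetric
bilinear form on `Dom` vanishing exactly on constants (RF1); the quotient of `Dom` by constants
is complete for the energy (pseudo-)norm (RF2, stated sequentially); `Dom` separates points
(RF3); the resistance suprema are finite (RF4); and the Markov/truncation property holds
(RF5). -/
structure IsResistanceForm (F : Type*) (En : (F → ℝ) → (F → ℝ) → ℝ)
    (Dom : Set (F → ℝ)) : Prop where
  nonempty : Nonempty F
  const_mem : ∀ c : ℝ, (fun _ => c) ∈ Dom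
  add_mem : ∀ ⦃f g : F → ℝ⦄, f ∈ Dom → g ∈ Dom → f + g ∈ Dom
  smul_mem : ∀ (c : ℝ) ⦃f : F → ℝ⦄, f ∈ Dom → c • f ∈ Dom
  symm : ∀ ⦃f g : F → ℝ⦄, f ∈ Dom → g ∈ Dom → En f g = En g f
  add_left : ∀ ⦃f g h : F → ℝ⦄, f ∈ Dom → g ∈ Dom → h ∈ Dom →
    En (f + g) h = En f h + En g h
  smul_left : ∀ (c : ℝ) ⦃f g : F → ℝ⦄, f ∈ Dom → g ∈ Dom → En (c • f) g = c * En f g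
  nonneg : ∀ ⦃f : F → ℝ⦄, f ∈ Dom → 0 ≤ En f f
  eq_zero_iff : ∀ ⦃f : F → ℝ⦄, f ∈ Dom → (En f f = 0 ↔ ∃ c : ℝ, f = fun _ => c)
  complete : ∀ u : ℕ → F → ℝ, (∀ n, u n ∈ Dom) →
    (∀ ε : ℝ, 0 < ε → ∃ N, ∀ m ≥ N, ∀ n ≥ N, En (u m - u n) (u m - u n) < ε) →
    ∃ g ∈ Dom, ∀ ε : ℝ, 0 < ε → ∃ N, ∀ n ≥ N, En (u n - g) (u n - g) < ε
  separates : ∀ ⦃x y : F⦄, x ≠ y → ∃ f ∈ Dom, f x ≠ f y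
  bddAbove : ∀ x y : F,
    BddAbove {r : ℝ | ∃ f ∈ Dom, 0 < En f f ∧ r = (f x - f y) ^ 2 / En f f}
  markov : ∀ ⦃f : F → ℝ⦄, f ∈ Dom →
    (fun t => min (max (f t) 0) 1) ∈ Dom ∧
    En (fun t => min (max (f t) 0) 1) (fun t => min (max (f t) 0) 1) ≤ En f f

/-- The resistance metric associated with a resistance form:
`R(x,y) = sup {(f x - f y)² / En f f}` for `x ≠ y`, and `R(x,x) = 0`. -/
noncomputable def resMetric {F : Type*} (En : (F → ℝ) → (F → ℝ) → ℝ)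
    (Dom : Set (F → ℝ)) (x y : F) : ℝ :=
  if x = y then 0
  else sSup {r : ℝ | ∃ f ∈ Dom, 0 < En f f ∧ r = (f x - f y) ^ 2 / En f f}

/-!
A function on `F = F₁ ∪ F₂` is a pair of functions on the pieces that agree at the cut point `z`,
and its energy is the sum of the energies of its restrictions, so the axioms of a resistance form
pass from the pieces to `F`. Extending a function on `F₁` to `F` by its value at `z` keeps its
energy, so `R ≥ R₁` on `F₁`; the energy of a function dominates that of its restriction, so
`R ≤ R₁`. Across `z` resistances add like resistors in series: `u² ≤ R₁E₁` and `v² ≤ R₂E₂` give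
`(u + v)² ≤ (R₁ + R₂)(E₁ + E₂)`, so `R ≤ R₁ + R₂`, and gluing rescaled potentials of the two
pieces gives the reverse inequality.
-/

namespace Set

variable {α β : Type*} (s : Set α)

@[simp] theorem domRestrict_add [Add β] (f g : α → β) :
    s.domRestrict (f + g) = s.domRestrict f + s.domRestrict g := rfl

@[simp] theorem domRestrict_sub [Sub β] (f g : α → β) :
    s.domRestrict (f - g) = s.domRestrict f - s.domRestrict g := rfl

@[simp] theorem domRestrict_smul {M : Type*} [SMul M β] (c : M) (f : α → β) :
    s.domRestrict (c • f) = c • s.domRestrict f := rfl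

@[simp] theorem domRestrict_const (b : β) : s.domRestrict (fun _ => b) = fun _ => b := rfl

end Set

theorem add_sq_le_add_mul_add {u v a b c d : ℝ} (ha : 0 ≤ a) (hb : 0 ≤ b) (hc : 0 ≤ c)
    (hd : 0 ≤ d) (hu : u ^ 2 ≤ a * c) (hv : v ^ 2 ≤ b * d) :
    (u + v) ^ 2 ≤ (a + b) * (c + d) := by
  have h2 : (2 * u * v) ^ 2 ≤ (a * d + b * c) ^ 2 := by
    nlinarith [mul_le_mul hu hv (sq_nonneg v) (mul_nonneg ha hc), sq_nonneg (a * d - b * c)]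
  have := abs_le_of_sq_le_sq' h2 (by positivity)
  nlinarith

section ResMetric

variable {F : Type*} {En : (F → ℝ) → (F → ℝ) → ℝ} {Dom : Set (F → ℝ)} {x y : F}

def resistanceQuotients (En : (F → ℝ) → (F → ℝ) → ℝ) (Dom : Set (F → ℝ)) (x y : F) : Set ℝ :=
  {r : ℝ | ∃ f ∈ Dom, 0 < En f f ∧ r = (f x - f y) ^ 2 / En f f}

theorem resMetric_self (x : F) : resMetric En Dom x x = 0 := if_pos rfl

theorem resMetric_of_ne (hxy : x ≠ y) :
    resMetric En Dom x y = sSup (resistanceQuotients En Dom x y) := if_neg hxy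

theorem resMetric_nonneg (x y : F) : 0 ≤ resMetric En Dom x y := by
  rcases eq_or_ne x y with rfl | hxy
  · rw [resMetric_self]
  rw [resMetric_of_ne hxy]
  refine Real.sSup_nonneg ?_
  rintro _ ⟨f, -, hE, rfl⟩
  exact div_nonneg (sq_nonneg _) hE.le

theorem bddAbove_resistanceQuotients_of_sq_sub_le {C : ℝ}
    (h : ∀ f ∈ Dom, (f x - f y) ^ 2 ≤ C * En f f) :
    BddAbove (resistanceQuotients En Dom x y) := by
  refine ⟨C, ?_⟩
  rintro _ ⟨f, hf, hE, rfl⟩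
  exact (div_le_iff₀ hE).2 (h f hf)

theorem resMetric_le_of_sq_sub_le {C : ℝ} (hC : 0 ≤ C)
    (h : ∀ f ∈ Dom, (f x - f y) ^ 2 ≤ C * En f f) : resMetric En Dom x y ≤ C := by
  rcases eq_or_ne x y with rfl | hxy
  · rwa [resMetric_self]
  rw [resMetric_of_ne hxy]
  refine Real.sSup_le ?_ hC
  rintro _ ⟨f, hf, hE, rfl⟩
  exact (div_le_iff₀ hE).2 (h f hf)

theorem div_le_resMetric (hbdd : BddAbove (resistanceQuotients En Dom x y)) {f : F → ℝ}
    (hf : f ∈ Dom) : (f x - f y) ^ 2 / En f f ≤ resMetric En Dom x y := by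
  rcases eq_or_ne x y with rfl | hxy
  · simp [resMetric_self]
  rcases le_or_gt (En f f) 0 with hE | hE
  · exact (div_nonpos_of_nonneg_of_nonpos (sq_nonneg _) hE).trans (resMetric_nonneg x y)
  · rw [resMetric_of_ne hxy]
    exact le_csSup hbdd ⟨f, hf, hE, rfl⟩

theorem resMetric_le_resMetric_of_forall_exists {F' : Type*} {En' : (F' → ℝ) → (F' → ℝ) → ℝ}
    {Dom' : Set (F' → ℝ)} {x' y' : F'} (hbdd : BddAbove (resistanceQuotients En Dom x y))
    (h : ∀ f' ∈ Dom', ∃ f ∈ Dom, f x - f y = f' x' - f' y' ∧ En f f = En' f' f') :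
    resMetric En' Dom' x' y' ≤ resMetric En Dom x y := by
  rcases eq_or_ne x' y' with rfl | hxy
  · rw [resMetric_self]
    exact resMetric_nonneg x y
  rw [resMetric_of_ne hxy]
  refine Real.sSup_le ?_ (resMetric_nonneg x y)
  rintro _ ⟨f', hf', -, rfl⟩
  obtain ⟨f, hf, hval, hEn⟩ := h f' hf'
  rw [← hval, ← hEn]
  exact div_le_resMetric hbdd hf

end ResMetric

namespace IsResistanceForm

variable {F : Type*} {En : (F → ℝ) → (F → ℝ) → ℝ} {Dom : Set (F → ℝ)} {f g : F → ℝ}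

theorem sub_mem (h : IsResistanceForm F En Dom) (hf : f ∈ Dom) (hg : g ∈ Dom) : f - g ∈ Dom := by
  simpa [sub_eq_add_neg] using h.add_mem hf (h.smul_mem (-1) hg)

theorem energy_const (h : IsResistanceForm F En Dom) (c : ℝ) :
    En (fun _ => c) (fun _ => c) = 0 :=
  (h.eq_zero_iff (h.const_mem c)).2 ⟨c, rfl⟩

theorem energy_smul (h : IsResistanceForm F En Dom) (t : ℝ) (hg : g ∈ Dom) :
    En (t • g) (t • g) = t ^ 2 * En g g := by
  rw [h.smul_left t hg (h.smul_mem t hg), h.symm hg (h.smul_mem t hg), h.smul_left t hg hg]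
  ring

/-- `t ↦ E(g + t c, g + t c) = E(g, g) + 2 t E(c, g)` is nonnegative, so its slope vanishes. -/
theorem energy_const_left (h : IsResistanceForm F En Dom) (c : ℝ) (hg : g ∈ Dom) :
    En (fun _ => c) g = 0 := by
  set k : F → ℝ := fun _ => c
  have hk : k ∈ Dom := h.const_mem c
  have hline : ∀ t : ℝ, 0 ≤ En g g + 2 * t * En k g := by
    intro t
    have htk := h.smul_mem t hk
    have hgtk := h.add_mem hg htk
    have hexp : En (g + t • k) (g + t • k) = En g g + 2 * t * En k g := by
      rw [h.add_left hg htk hgtk, h.smul_left t hk hgtk, h.symm hg hgtk, h.symm hk hgtk,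
        h.add_left hg htk hg, h.add_left hg htk hk, h.smul_left t hk hg, h.smul_left t hk hk,
        h.energy_const c, h.symm hg hk]
      ring
    exact hexp ▸ h.nonneg hgtk
  by_contra hne
  have := hline (-(En g g + 1) / (2 * En k g))
  field_simp at this
  linarith

theorem energy_add_const (h : IsResistanceForm F En Dom) (c : ℝ) (hg : g ∈ Dom) :
    En (g + fun _ => c) (g + fun _ => c) = En g g := by
  have hk := h.const_mem c
  have hgk := h.add_mem hg hk
  rw [h.add_left hg hk hgk, h.energy_const_left c hgk, h.symm hg hgk, h.add_left hg hk hg,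
    h.energy_const_left c hg, add_zero, add_zero]

theorem energy_sub_const (h : IsResistanceForm F En Dom) (c : ℝ) (hg : g ∈ Dom) :
    En (g - fun _ => c) (g - fun _ => c) = En g g := by
  have hneg : (g - fun _ => c) = g + fun _ => -c := sub_eq_add_neg _ _
  rw [hneg, h.energy_add_const _ hg]

theorem resistanceQuotients_nonempty (h : IsResistanceForm F En Dom) {x y : F} (hxy : x ≠ y) :
    (resistanceQuotients En Dom x y).Nonempty := by
  obtain ⟨f, hf, hfxy⟩ := h.separates hxy
  have hE : 0 < En f f := by
    refine (h.nonneg hf).lt_of_ne' fun h0 => ?_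
    obtain ⟨c, rfl⟩ := (h.eq_zero_iff hf).1 h0
    exact hfxy rfl
  exact ⟨_, f, hf, hE, rfl⟩

theorem sq_sub_le_resMetric_mul (h : IsResistanceForm F En Dom) (x y : F) (hf : f ∈ Dom) :
    (f x - f y) ^ 2 ≤ resMetric En Dom x y * En f f := by
  rcases (h.nonneg hf).lt_or_eq with hE | hE
  · rw [← div_le_iff₀ hE]
    exact div_le_resMetric (h.bddAbove x y) hf
  · obtain ⟨c, rfl⟩ := (h.eq_zero_iff hf).1 hE.symm
    simp [← hE]

end IsResistanceForm

section Glue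

variable {F : Type*} {S₁ S₂ : Set F} {z : F}

noncomputable def retractTo {S : Set F} (hz : z ∈ S) (x : F) : S :=
  if hx : x ∈ S then ⟨x, hx⟩ else ⟨z, hz⟩

theorem retractTo_of_mem {S : Set F} (hz : z ∈ S) {x : F} (hx : x ∈ S) :
    retractTo hz x = ⟨x, hx⟩ := dif_pos hx

theorem domRestrict_comp_retractTo {β : Type*} (hz : z ∈ S₁) (f : S₁ → β) :
    S₁.domRestrict (f ∘ retractTo hz) = f :=
  funext fun p => congrArg f (retractTo_of_mem hz p.2)

theorem domRestrict_comp_retractTo_of_inter {β : Type*} (hz : z ∈ S₁) (hcut : S₁ ∩ S₂ ⊆ {z})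
    (f : S₁ → β) : S₂.domRestrict (f ∘ retractTo hz) = fun _ => f ⟨z, hz⟩ := by
  funext p
  by_cases hp : (p : F) ∈ S₁
  · obtain rfl : (p : F) = z := hcut ⟨hp, p.2⟩
    exact congrArg f (retractTo_of_mem hz hp)
  · exact congrArg f (dif_neg hp)

theorem injective_retractTo_prod (hz1 : z ∈ S₁) (hz2 : z ∈ S₂) (hcover : S₁ ∪ S₂ = Set.univ) :
    Function.Injective fun x => (retractTo hz1 x, retractTo hz2 x) := by
  intro x y hxy
  have h1 := congrArg (fun p => (p.1 : F)) hxy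
  have h2 := congrArg (fun p => (p.2 : F)) hxy
  have hx : x ∈ S₁ ∨ x ∈ S₂ := (hcover ▸ Set.mem_univ x : x ∈ S₁ ∪ S₂)
  have hy : y ∈ S₁ ∨ y ∈ S₂ := (hcover ▸ Set.mem_univ y : y ∈ S₁ ∪ S₂)
  clear hxy hcover
  simp only [retractTo] at h1 h2
  split_ifs at h1 h2 <;> simp_all

noncomputable def glue (hz1 : z ∈ S₁) (hz2 : z ∈ S₂) (f₁ : S₁ → ℝ) (f₂ : S₂ → ℝ) : F → ℝ :=
  f₁ ∘ retractTo hz1 + f₂ ∘ retractTo hz2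

theorem glue_comm (hz1 : z ∈ S₁) (hz2 : z ∈ S₂) (f₁ : S₁ → ℝ) (f₂ : S₂ → ℝ) :
    glue hz2 hz1 f₂ f₁ = glue hz1 hz2 f₁ f₂ := add_comm _ _

theorem domRestrict_glue_left (hz1 : z ∈ S₁) (hz2 : z ∈ S₂) (hcut : S₁ ∩ S₂ ⊆ {z})
    (f₁ : S₁ → ℝ) (f₂ : S₂ → ℝ) :
    S₁.domRestrict (glue hz1 hz2 f₁ f₂) = f₁ + fun _ => f₂ ⟨z, hz2⟩ := by
  rw [glue, Set.domRestrict_add, domRestrict_comp_retractTo,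
    domRestrict_comp_retractTo_of_inter hz2 (Set.inter_comm S₁ S₂ ▸ hcut)]

theorem domRestrict_glue_right (hz1 : z ∈ S₁) (hz2 : z ∈ S₂) (hcut : S₁ ∩ S₂ ⊆ {z})
    (f₁ : S₁ → ℝ) (f₂ : S₂ → ℝ) :
    S₂.domRestrict (glue hz1 hz2 f₁ f₂) = f₂ + fun _ => f₁ ⟨z, hz1⟩ := by
  rw [← glue_comm, domRestrict_glue_left hz2 hz1 (Set.inter_comm S₁ S₂ ▸ hcut)]

def gluedDom (Dom₁ : Set (S₁ → ℝ)) (Dom₂ : Set (S₂ → ℝ)) : Set (F → ℝ) :=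
  {f | S₁.domRestrict f ∈ Dom₁ ∧ S₂.domRestrict f ∈ Dom₂}

def gluedEn (En₁ : (S₁ → ℝ) → (S₁ → ℝ) → ℝ) (En₂ : (S₂ → ℝ) → (S₂ → ℝ) → ℝ)
    (f g : F → ℝ) : ℝ :=
  En₁ (S₁.domRestrict f) (S₁.domRestrict g) + En₂ (S₂.domRestrict f) (S₂.domRestrict g)

variable {En₁ : (S₁ → ℝ) → (S₁ → ℝ) → ℝ} {Dom₁ : Set (S₁ → ℝ)}
  {En₂ : (S₂ → ℝ) → (S₂ → ℝ) → ℝ} {Dom₂ : Set (S₂ → ℝ)} {x y : F}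

theorem gluedDom_comm : gluedDom Dom₂ Dom₁ = gluedDom Dom₁ Dom₂ :=
  Set.ext fun _ => and_comm

theorem gluedEn_comm : gluedEn En₂ En₁ = gluedEn En₁ En₂ :=
  funext₂ fun _ _ => add_comm _ _

theorem comp_retractTo_mem_gluedDom (h₂ : IsResistanceForm S₂ En₂ Dom₂) (hz1 : z ∈ S₁)
    (hcut : S₁ ∩ S₂ ⊆ {z}) {f₁ : S₁ → ℝ} (hf₁ : f₁ ∈ Dom₁) :
    f₁ ∘ retractTo hz1 ∈ gluedDom Dom₁ Dom₂ := by
  refine ⟨?_, ?_⟩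
  · rwa [domRestrict_comp_retractTo]
  · rw [domRestrict_comp_retractTo_of_inter hz1 hcut]
    exact h₂.const_mem _

theorem gluedEn_comp_retractTo (h₂ : IsResistanceForm S₂ En₂ Dom₂) (hz1 : z ∈ S₁)
    (hcut : S₁ ∩ S₂ ⊆ {z}) (f₁ : S₁ → ℝ) :
    gluedEn En₁ En₂ (f₁ ∘ retractTo hz1) (f₁ ∘ retractTo hz1) = En₁ f₁ f₁ := by
  rw [gluedEn, domRestrict_comp_retractTo, domRestrict_comp_retractTo_of_inter hz1 hcut,
    h₂.energy_const, add_zero]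

theorem glue_mem_gluedDom (h₁ : IsResistanceForm S₁ En₁ Dom₁)
    (h₂ : IsResistanceForm S₂ En₂ Dom₂) (hz1 : z ∈ S₁) (hz2 : z ∈ S₂) (hcut : S₁ ∩ S₂ ⊆ {z})
    {f₁ : S₁ → ℝ} {f₂ : S₂ → ℝ} (hf₁ : f₁ ∈ Dom₁) (hf₂ : f₂ ∈ Dom₂) :
    glue hz1 hz2 f₁ f₂ ∈ gluedDom Dom₁ Dom₂ := by
  refine ⟨?_, ?_⟩
  · rw [domRestrict_glue_left hz1 hz2 hcut]
    exact h₁.add_mem hf₁ (h₁.const_mem _)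
  · rw [domRestrict_glue_right hz1 hz2 hcut]
    exact h₂.add_mem hf₂ (h₂.const_mem _)

theorem gluedEn_glue (h₁ : IsResistanceForm S₁ En₁ Dom₁) (h₂ : IsResistanceForm S₂ En₂ Dom₂)
    (hz1 : z ∈ S₁) (hz2 : z ∈ S₂) (hcut : S₁ ∩ S₂ ⊆ {z}) {f₁ : S₁ → ℝ} {f₂ : S₂ → ℝ}
    (hf₁ : f₁ ∈ Dom₁) (hf₂ : f₂ ∈ Dom₂) :
    gluedEn En₁ En₂ (glue hz1 hz2 f₁ f₂) (glue hz1 hz2 f₁ f₂) = En₁ f₁ f₁ + En₂ f₂ f₂ := by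
  rw [gluedEn, domRestrict_glue_left hz1 hz2 hcut, domRestrict_glue_right hz1 hz2 hcut,
    h₁.energy_add_const _ hf₁, h₂.energy_add_const _ hf₂]

theorem gluedEn_eq_zero_iff (h₁ : IsResistanceForm S₁ En₁ Dom₁)
    (h₂ : IsResistanceForm S₂ En₂ Dom₂) (hz1 : z ∈ S₁) (hz2 : z ∈ S₂)
    (hcover : S₁ ∪ S₂ = Set.univ) {f : F → ℝ} (hf : f ∈ gluedDom Dom₁ Dom₂) :
    gluedEn En₁ En₂ f f = 0 ↔ ∃ c : ℝ, f = fun _ => c := by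
  constructor
  · intro h0
    obtain ⟨h0₁, h0₂⟩ := (add_eq_zero_iff_of_nonneg (h₁.nonneg hf.1) (h₂.nonneg hf.2)).1 h0
    obtain ⟨c₁, hc₁⟩ := (h₁.eq_zero_iff hf.1).1 h0₁
    obtain ⟨c₂, hc₂⟩ := (h₂.eq_zero_iff hf.2).1 h0₂
    have hc : c₂ = c₁ := (congrFun hc₂ ⟨z, hz2⟩).symm.trans (congrFun hc₁ ⟨z, hz1⟩)
    refine ⟨c₁, funext fun x => ?_⟩
    rcases (hcover ▸ Set.mem_univ x : x ∈ S₁ ∪ S₂) with hx | hx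
    · exact congrFun hc₁ ⟨x, hx⟩
    · exact (congrFun hc₂ ⟨x, hx⟩).trans hc
  · rintro ⟨c, rfl⟩
    rw [gluedEn, Set.domRestrict_const, Set.domRestrict_const, h₁.energy_const,
      h₂.energy_const, add_zero]

theorem exists_limit_domRestrict_left (h₁ : IsResistanceForm S₁ En₁ Dom₁)
    (h₂ : IsResistanceForm S₂ En₂ Dom₂) (u : ℕ → F → ℝ) (hu : ∀ n, u n ∈ gluedDom Dom₁ Dom₂)
    (hcau : ∀ ε : ℝ, 0 < ε → ∃ N, ∀ m ≥ N, ∀ n ≥ N,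
      gluedEn En₁ En₂ (u m - u n) (u m - u n) < ε) :
    ∃ g₁ ∈ Dom₁, ∀ ε : ℝ, 0 < ε → ∃ N, ∀ n ≥ N,
      En₁ (S₁.domRestrict (u n) - g₁) (S₁.domRestrict (u n) - g₁) < ε := by
  refine h₁.complete _ (fun n => (hu n).1) fun ε hε => ?_
  obtain ⟨N, hN⟩ := hcau ε hε
  refine ⟨N, fun m hm n hn => lt_of_le_of_lt ?_ (hN m hm n hn)⟩
  exact le_add_of_nonneg_right (h₂.nonneg (h₂.sub_mem (hu m).2 (hu n).2))

/-- The glued limit is `glue g₁ g₂`; on each piece it differs from the limit there by a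
constant, which costs no energy. -/
theorem gluedEn_complete (h₁ : IsResistanceForm S₁ En₁ Dom₁)
    (h₂ : IsResistanceForm S₂ En₂ Dom₂) (hz1 : z ∈ S₁) (hz2 : z ∈ S₂) (hcut : S₁ ∩ S₂ ⊆ {z})
    (u : ℕ → F → ℝ) (hu : ∀ n, u n ∈ gluedDom Dom₁ Dom₂)
    (hcau : ∀ ε : ℝ, 0 < ε → ∃ N, ∀ m ≥ N, ∀ n ≥ N,
      gluedEn En₁ En₂ (u m - u n) (u m - u n) < ε) :
    ∃ g ∈ gluedDom Dom₁ Dom₂, ∀ ε : ℝ, 0 < ε → ∃ N, ∀ n ≥ N,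
      gluedEn En₁ En₂ (u n - g) (u n - g) < ε := by
  obtain ⟨g₁, hg₁, hlim₁⟩ := exists_limit_domRestrict_left h₁ h₂ u hu hcau
  obtain ⟨g₂, hg₂, hlim₂⟩ := exists_limit_domRestrict_left h₂ h₁ u
    (by rwa [gluedDom_comm]) (by rwa [gluedEn_comm])
  refine ⟨glue hz1 hz2 g₁ g₂, glue_mem_gluedDom h₁ h₂ hz1 hz2 hcut hg₁ hg₂, fun ε hε => ?_⟩
  obtain ⟨N₁, hN₁⟩ := hlim₁ (ε / 2) (half_pos hε)
  obtain ⟨N₂, hN₂⟩ := hlim₂ (ε / 2) (half_pos hε)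
  refine ⟨max N₁ N₂, fun n hn => ?_⟩
  rw [gluedEn, Set.domRestrict_sub, Set.domRestrict_sub, domRestrict_glue_left hz1 hz2 hcut,
    domRestrict_glue_right hz1 hz2 hcut, ← sub_sub, ← sub_sub,
    h₁.energy_sub_const _ (h₁.sub_mem (hu n).1 hg₁),
    h₂.energy_sub_const _ (h₂.sub_mem (hu n).2 hg₂)]
  linarith [hN₁ n (le_of_max_le_left hn), hN₂ n (le_of_max_le_right hn)]

theorem sq_sub_le_mul_gluedEn_of_mem_left (h₁ : IsResistanceForm S₁ En₁ Dom₁)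
    (h₂ : IsResistanceForm S₂ En₂ Dom₂) (hx : x ∈ S₁) (hy : y ∈ S₁) {f : F → ℝ}
    (hf : f ∈ gluedDom Dom₁ Dom₂) :
    (f x - f y) ^ 2 ≤ resMetric En₁ Dom₁ ⟨x, hx⟩ ⟨y, hy⟩ * gluedEn En₁ En₂ f f :=
  (h₁.sq_sub_le_resMetric_mul ⟨x, hx⟩ ⟨y, hy⟩ hf.1).trans <|
    mul_le_mul_of_nonneg_left (le_add_of_nonneg_right (h₂.nonneg hf.2)) (resMetric_nonneg _ _)

theorem sq_sub_le_mul_gluedEn_of_mem_left_of_mem_right (h₁ : IsResistanceForm S₁ En₁ Dom₁)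
    (h₂ : IsResistanceForm S₂ En₂ Dom₂) (hz1 : z ∈ S₁) (hz2 : z ∈ S₂) (hx : x ∈ S₁)
    (hy : y ∈ S₂) {f : F → ℝ} (hf : f ∈ gluedDom Dom₁ Dom₂) :
    (f x - f y) ^ 2 ≤ (resMetric En₁ Dom₁ ⟨x, hx⟩ ⟨z, hz1⟩ + resMetric En₂ Dom₂ ⟨z, hz2⟩ ⟨y, hy⟩) *
      gluedEn En₁ En₂ f f :=
  calc (f x - f y) ^ 2 = ((f x - f z) + (f z - f y)) ^ 2 := by ring
    _ ≤ _ := add_sq_le_add_mul_add (resMetric_nonneg _ _) (resMetric_nonneg _ _)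
      (h₁.nonneg hf.1) (h₂.nonneg hf.2) (h₁.sq_sub_le_resMetric_mul ⟨x, hx⟩ ⟨z, hz1⟩ hf.1)
      (h₂.sq_sub_le_resMetric_mul ⟨z, hz2⟩ ⟨y, hy⟩ hf.2)

theorem exists_sq_sub_cut_le_mul_gluedEn (h₁ : IsResistanceForm S₁ En₁ Dom₁)
    (h₂ : IsResistanceForm S₂ En₂ Dom₂) (hz1 : z ∈ S₁) (hz2 : z ∈ S₂)
    (hcover : S₁ ∪ S₂ = Set.univ) (x : F) :
    ∃ C : ℝ, ∀ f ∈ gluedDom Dom₁ Dom₂, (f x - f z) ^ 2 ≤ C * gluedEn En₁ En₂ f f := by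
  rcases (hcover ▸ Set.mem_univ x : x ∈ S₁ ∪ S₂) with hx | hx
  · exact ⟨_, fun f hf => sq_sub_le_mul_gluedEn_of_mem_left h₁ h₂ hx hz1 hf⟩
  · refine ⟨resMetric En₂ Dom₂ ⟨x, hx⟩ ⟨z, hz2⟩, fun f hf => ?_⟩
    rw [← gluedEn_comm]
    exact sq_sub_le_mul_gluedEn_of_mem_left h₂ h₁ hx hz2 (gluedDom_comm ▸ hf)

theorem IsResistanceForm.glue (h₁ : IsResistanceForm S₁ En₁ Dom₁)
    (h₂ : IsResistanceForm S₂ En₂ Dom₂) (hz1 : z ∈ S₁) (hz2 : z ∈ S₂) (hcut : S₁ ∩ S₂ ⊆ {z})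
    (hcover : S₁ ∪ S₂ = Set.univ) :
    IsResistanceForm F (gluedEn En₁ En₂) (gluedDom Dom₁ Dom₂) where
  nonempty := ⟨z⟩
  const_mem c := ⟨h₁.const_mem c, h₂.const_mem c⟩
  add_mem _ _ hf hg := ⟨h₁.add_mem hf.1 hg.1, h₂.add_mem hf.2 hg.2⟩
  smul_mem c _ hf := ⟨h₁.smul_mem c hf.1, h₂.smul_mem c hf.2⟩
  symm _ _ hf hg := congrArg₂ (· + ·) (h₁.symm hf.1 hg.1) (h₂.symm hf.2 hg.2)
  add_left _ _ _ hf hg hk := by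
    simp only [gluedEn, Set.domRestrict_add, h₁.add_left hf.1 hg.1 hk.1,
      h₂.add_left hf.2 hg.2 hk.2]
    ring
  smul_left c _ _ hf hg := by
    simp only [gluedEn, Set.domRestrict_smul, h₁.smul_left c hf.1 hg.1,
      h₂.smul_left c hf.2 hg.2]
    ring
  nonneg _ hf := add_nonneg (h₁.nonneg hf.1) (h₂.nonneg hf.2)
  eq_zero_iff _ hf := gluedEn_eq_zero_iff h₁ h₂ hz1 hz2 hcover hf
  complete := gluedEn_complete h₁ h₂ hz1 hz2 hcut
  separates x y hxy := by
    have hne := (injective_retractTo_prod hz1 hz2 hcover).ne hxy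
    simp only [ne_eq, Prod.mk.injEq, not_and_or] at hne
    rcases hne with hne | hne
    · obtain ⟨f₁, hf₁, hval⟩ := h₁.separates hne
      exact ⟨f₁ ∘ retractTo hz1, comp_retractTo_mem_gluedDom h₂ hz1 hcut hf₁, hval⟩
    · obtain ⟨f₂, hf₂, hval⟩ := h₂.separates hne
      exact ⟨f₂ ∘ retractTo hz2,
        gluedDom_comm ▸ comp_retractTo_mem_gluedDom h₁ hz2 (Set.inter_comm S₁ S₂ ▸ hcut) hf₂,
        hval⟩
  bddAbove x y := by
    obtain ⟨Cx, hCx⟩ := exists_sq_sub_cut_le_mul_gluedEn h₁ h₂ hz1 hz2 hcover x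
    obtain ⟨Cy, hCy⟩ := exists_sq_sub_cut_le_mul_gluedEn h₁ h₂ hz1 hz2 hcover y
    refine bddAbove_resistanceQuotients_of_sq_sub_le (C := 2 * (Cx + Cy)) fun f hf => ?_
    nlinarith [hCx f hf, hCy f hf, sq_nonneg (f x - f z + (f y - f z))]
  markov _ hf :=
    ⟨⟨(h₁.markov hf.1).1, (h₂.markov hf.2).1⟩, add_le_add (h₁.markov hf.1).2 (h₂.markov hf.2).2⟩

theorem resMetric_gluedEn_of_mem_left (h₁ : IsResistanceForm S₁ En₁ Dom₁)
    (h₂ : IsResistanceForm S₂ En₂ Dom₂) (hz1 : z ∈ S₁) (hcut : S₁ ∩ S₂ ⊆ {z}) (hx : x ∈ S₁)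
    (hy : y ∈ S₁) :
    resMetric (gluedEn En₁ En₂) (gluedDom Dom₁ Dom₂) x y =
      resMetric En₁ Dom₁ ⟨x, hx⟩ ⟨y, hy⟩ := by
  have hbound := fun f (hf : f ∈ gluedDom Dom₁ Dom₂) =>
    sq_sub_le_mul_gluedEn_of_mem_left h₁ h₂ hx hy hf
  refine le_antisymm (resMetric_le_of_sq_sub_le (resMetric_nonneg _ _) hbound) ?_
  refine resMetric_le_resMetric_of_forall_exists
    (bddAbove_resistanceQuotients_of_sq_sub_le hbound) fun f₁ hf₁ => ?_
  refine ⟨f₁ ∘ retractTo hz1, comp_retractTo_mem_gluedDom h₂ hz1 hcut hf₁, ?_,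
    gluedEn_comp_retractTo h₂ hz1 hcut f₁⟩
  simp only [Function.comp_apply, retractTo_of_mem hz1 hx, retractTo_of_mem hz1 hy]

theorem resMetric_gluedEn_of_mem_right (h₁ : IsResistanceForm S₁ En₁ Dom₁)
    (h₂ : IsResistanceForm S₂ En₂ Dom₂) (hz2 : z ∈ S₂) (hcut : S₁ ∩ S₂ ⊆ {z}) (hx : x ∈ S₂)
    (hy : y ∈ S₂) :
    resMetric (gluedEn En₁ En₂) (gluedDom Dom₁ Dom₂) x y =
      resMetric En₂ Dom₂ ⟨x, hx⟩ ⟨y, hy⟩ := by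
  rw [← gluedEn_comm, ← gluedDom_comm]
  exact resMetric_gluedEn_of_mem_left h₂ h₁ hz2 (Set.inter_comm S₁ S₂ ▸ hcut) hx hy

/-- With `a = f₁ x - f₁ z`, `b = f₂ z - f₂ y`, the glued potential `(a/E₁) f₁ + (b/E₂) f₂` has
voltage drop and energy both equal to `a²/E₁ + b²/E₂`. -/
theorem div_add_div_le_resMetric_gluedEn (h₁ : IsResistanceForm S₁ En₁ Dom₁)
    (h₂ : IsResistanceForm S₂ En₂ Dom₂) (hz1 : z ∈ S₁) (hz2 : z ∈ S₂) (hcut : S₁ ∩ S₂ ⊆ {z})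
    (hx : x ∈ S₁) (hy : y ∈ S₂) {f₁ : S₁ → ℝ} {f₂ : S₂ → ℝ} (hf₁ : f₁ ∈ Dom₁) (hf₂ : f₂ ∈ Dom₂)
    (hE₁ : 0 < En₁ f₁ f₁) (hE₂ : 0 < En₂ f₂ f₂) :
    (f₁ ⟨x, hx⟩ - f₁ ⟨z, hz1⟩) ^ 2 / En₁ f₁ f₁ + (f₂ ⟨z, hz2⟩ - f₂ ⟨y, hy⟩) ^ 2 / En₂ f₂ f₂ ≤
      resMetric (gluedEn En₁ En₂) (gluedDom Dom₁ Dom₂) x y := by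
  set a := f₁ ⟨x, hx⟩ - f₁ ⟨z, hz1⟩ with ha
  set b := f₂ ⟨z, hz2⟩ - f₂ ⟨y, hy⟩ with hb
  set g := glue hz1 hz2 ((a / En₁ f₁ f₁) • f₁) ((b / En₂ f₂ f₂) • f₂)
  have hgx : g x = a / En₁ f₁ f₁ * f₁ ⟨x, hx⟩ + b / En₂ f₂ f₂ * f₂ ⟨z, hz2⟩ :=
    congrFun (domRestrict_glue_left hz1 hz2 hcut _ _) ⟨x, hx⟩
  have hgy : g y = b / En₂ f₂ f₂ * f₂ ⟨y, hy⟩ + a / En₁ f₁ f₁ * f₁ ⟨z, hz1⟩ :=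
    congrFun (domRestrict_glue_right hz1 hz2 hcut _ _) ⟨y, hy⟩
  have hdrop : g x - g y = a ^ 2 / En₁ f₁ f₁ + b ^ 2 / En₂ f₂ f₂ := by
    rw [hgx, hgy, ha, hb]
    field_simp
    ring
  have henergy : gluedEn En₁ En₂ g g = a ^ 2 / En₁ f₁ f₁ + b ^ 2 / En₂ f₂ f₂ := by
    rw [gluedEn_glue h₁ h₂ hz1 hz2 hcut (h₁.smul_mem _ hf₁) (h₂.smul_mem _ hf₂),
      h₁.energy_smul _ hf₁, h₂.energy_smul _ hf₂]
    field_simp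
  have hbdd := bddAbove_resistanceQuotients_of_sq_sub_le fun f hf =>
    sq_sub_le_mul_gluedEn_of_mem_left_of_mem_right h₁ h₂ hz1 hz2 hx hy hf
  calc
    _ = (g x - g y) ^ 2 / gluedEn En₁ En₂ g g := by
      rw [pow_two (g x - g y), hdrop, henergy, mul_self_div_self]
    _ ≤ _ := div_le_resMetric hbdd
      (glue_mem_gluedDom h₁ h₂ hz1 hz2 hcut (h₁.smul_mem _ hf₁) (h₂.smul_mem _ hf₂))

theorem resMetric_gluedEn_of_mem_left_of_mem_right (h₁ : IsResistanceForm S₁ En₁ Dom₁)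
    (h₂ : IsResistanceForm S₂ En₂ Dom₂) (hz1 : z ∈ S₁) (hz2 : z ∈ S₂) (hcut : S₁ ∩ S₂ ⊆ {z})
    (hx : x ∈ S₁) (hy : y ∈ S₂) :
    resMetric (gluedEn En₁ En₂) (gluedDom Dom₁ Dom₂) x y =
      resMetric En₁ Dom₁ ⟨x, hx⟩ ⟨z, hz1⟩ + resMetric En₂ Dom₂ ⟨z, hz2⟩ ⟨y, hy⟩ := by
  rcases eq_or_ne x z with rfl | hxz
  · rw [resMetric_self, zero_add]
    exact resMetric_gluedEn_of_mem_right h₁ h₂ hz2 hcut hz2 hy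
  rcases eq_or_ne y z with rfl | hyz
  · rw [resMetric_self, add_zero]
    exact resMetric_gluedEn_of_mem_left h₁ h₂ hz1 hcut hx hz1
  refine le_antisymm (resMetric_le_of_sq_sub_le
    (add_nonneg (resMetric_nonneg _ _) (resMetric_nonneg _ _))
    fun f hf => sq_sub_le_mul_gluedEn_of_mem_left_of_mem_right h₁ h₂ hz1 hz2 hx hy hf) ?_
  have hxz' : (⟨x, hx⟩ : S₁) ≠ ⟨z, hz1⟩ := fun h => hxz (congrArg Subtype.val h)
  have hzy' : (⟨z, hz2⟩ : S₂) ≠ ⟨y, hy⟩ := fun h => hyz (congrArg Subtype.val h).symm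
  have hne₁ := h₁.resistanceQuotients_nonempty hxz'
  have hne₂ := h₂.resistanceQuotients_nonempty hzy'
  rw [resMetric_of_ne hxz', resMetric_of_ne hzy',
    ← csSup_add hne₁ (h₁.bddAbove _ _) hne₂ (h₂.bddAbove _ _)]
  refine csSup_le (hne₁.add hne₂) ?_
  rintro _ ⟨_, ⟨f₁, hf₁, hE₁, rfl⟩, _, ⟨f₂, hf₂, hE₂, rfl⟩, rfl⟩
  exact div_add_div_le_resMetric_gluedEn h₁ h₂ hz1 hz2 hcut hx hy hf₁ hf₂ hE₁ hE₂

end Glue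

/-- Gluing two resistance forms at a single common point `z` (`F₁ ∩ F₂ = {z}`,
`F₁ ∪ F₂ = F`): the sum form on `{f : f|_{F₁} ∈ Dom₁, f|_{F₂} ∈ Dom₂}` is a resistance form
on `F₁ ∪ F₂`, its resistance metric restricts to the metrics of the pieces, and resistances
across the cut point add up. -/
theorem resistance_form_glue_cut_point {F : Type*} (S₁ S₂ : Set F) (z : F)
    (hz1 : z ∈ S₁) (hz2 : z ∈ S₂)
    (hUnion : S₁ ∪ S₂ = Set.univ) (hInter : S₁ ∩ S₂ = {z})
    (En₁ : (↥S₁ → ℝ) → (↥S₁ → ℝ) → ℝ) (Dom₁ : Set (↥S₁ → ℝ))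
    (En₂ : (↥S₂ → ℝ) → (↥S₂ → ℝ) → ℝ) (Dom₂ : Set (↥S₂ → ℝ))
    (h₁ : IsResistanceForm ↥S₁ En₁ Dom₁)
    (h₂ : IsResistanceForm ↥S₂ En₂ Dom₂)
    (En : (F → ℝ) → (F → ℝ) → ℝ) (Dom : Set (F → ℝ))
    (hDom : Dom = {f : F → ℝ | S₁.restrict f ∈ Dom₁ ∧ S₂.restrict f ∈ Dom₂})
    (hEn : ∀ f g : F → ℝ,
      En f g = En₁ (S₁.restrict f) (S₁.restrict g) + En₂ (S₂.restrict f) (S₂.restrict g)) :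
    IsResistanceForm F En Dom ∧
    (∀ (x y : F) (hx : x ∈ S₁) (hy : y ∈ S₁),
      resMetric En Dom x y = resMetric En₁ Dom₁ ⟨x, hx⟩ ⟨y, hy⟩) ∧
    (∀ (x y : F) (hx : x ∈ S₂) (hy : y ∈ S₂),
      resMetric En Dom x y = resMetric En₂ Dom₂ ⟨x, hx⟩ ⟨y, hy⟩) ∧
    (∀ (x y : F) (hx : x ∈ S₁) (hy : y ∈ S₂),
      resMetric En Dom x y =
        resMetric En₁ Dom₁ ⟨x, hx⟩ ⟨z, hz1⟩ + resMetric En₂ Dom₂ ⟨z, hz2⟩ ⟨y, hy⟩) := by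
  have hcut : S₁ ∩ S₂ ⊆ {z} := hInter.subset
  obtain rfl : En = gluedEn En₁ En₂ := funext₂ hEn
  obtain rfl : Dom = gluedDom Dom₁ Dom₂ := hDom
  exact ⟨h₁.glue h₂ hz1 hz2 hcut hUnion,
    fun _ _ hx hy => resMetric_gluedEn_of_mem_left h₁ h₂ hz1 hcut hx hy,
    fun _ _ hx hy => resMetric_gluedEn_of_mem_right h₁ h₂ hz2 hcut hx hy,
    fun _ _ hx hy => resMetric_gluedEn_of_mem_left_of_mem_right h₁ h₂ hz1 hz2 hcut hx hy⟩
end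

section
/- Let F₁, F₂ be two nonempty sets such that F₁ ∩ F₂ is a nonempty finite set. For i = 1, 2, let (E_i, 𝓕_i) be a resistance form on F_i, and let (E, 𝓕) be the resistance form on F₁ ∪ F₂ given by 𝓕 = {f : f|_{F₁} ∈ 𝓕₁, f|_{F₂} ∈ 𝓕₂} and E(f,f) = E₁(f|_{F₁}, f|_{F₁}) + E₂(f|_{F₂}, f|_{F₂}). Let A ⊆ F₁ ∪ F₂ be a finite set containing F₁ ∩ F₂ and set A_i = A ∩ F_i for i = 1, 2. Then for every function g : A → ℝ, the traces satisfy E|_A(g,g) = E₁|_{A₁}(g|_{A₁}, g|_{A₁}) + E₂|_{A₂}(g|_{A₂}, g|_{A₂}). -/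
/-!
Extensions of `g` to `F₁ ∪ F₂` are exactly the gluings of extensions to `F₁` and `F₂`, since these
agree on `F₁ ∩ F₂ ⊆ A`; their energies add. So the trace energy on `A` is the infimum of a
Minkowski sum of two sets of reals, which splits as the sum of the infima once both sets are
nonempty and bounded below. Nonemptiness is where the resistance-form axioms enter: point
separation and the Markov property give, for each point of a finite set, a function in the domain
equal to `1` there and `0` at the other points, and linear combinations of these extend any
function on the finite set.
-/

open scoped Classical

/-- The trace of a form `(En, Dom)` on a subset `A`: for `g : A → ℝ`,
`En|_A(g,g) = inf {En f f : f ∈ Dom, f|_A = g}`. -/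
noncomputable def traceEnergy {F : Type*} (En : (F → ℝ) → (F → ℝ) → ℝ)
    (Dom : Set (F → ℝ)) (A : Set F) (g : ↥A → ℝ) : ℝ :=
  sInf {e : ℝ | ∃ f ∈ Dom, A.restrict f = g ∧ En f f = e}

open scoped Pointwise

/-- The truncation `f̄ = (f ∨ 0) ∧ 1` of (RF5). -/
def unitClip {G : Type*} (f : G → ℝ) : G → ℝ := fun t => min (max (f t) 0) 1

section UnitClip

variable {G : Type*} {f : G → ℝ} {t : G}

lemma unitClip_apply_mem_Icc (f : G → ℝ) (t : G) : unitClip f t ∈ Set.Icc (0 : ℝ) 1 :=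
  ⟨le_min (le_max_right _ _) zero_le_one, min_le_right _ _⟩

lemma unitClip_apply_of_nonpos (ht : f t ≤ 0) : unitClip f t = 0 := by
  simp [unitClip, max_eq_right ht]

lemma unitClip_apply_of_mem_Icc (ht : f t ∈ Set.Icc (0 : ℝ) 1) : unitClip f t = f t := by
  simp [unitClip, max_eq_left ht.1, min_eq_left ht.2]

end UnitClip

lemma exists_restrict_eq_of_union_eq_univ {F β : Type*} {S₁ S₂ : Set F}
    (hUnion : S₁ ∪ S₂ = Set.univ) (f₁ : S₁ → β) (f₂ : S₂ → β)
    (hagree : ∀ x (hx₁ : x ∈ S₁) (hx₂ : x ∈ S₂), f₁ ⟨x, hx₁⟩ = f₂ ⟨x, hx₂⟩) :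
    ∃ f : F → β, S₁.restrict f = f₁ ∧ S₂.restrict f = f₂ := by
  classical
  have hmem₂ : ∀ x, x ∉ S₁ → x ∈ S₂ := fun x hx =>
    (Set.eq_univ_iff_forall.mp hUnion x).resolve_left hx
  refine ⟨fun x => if hx : x ∈ S₁ then f₁ ⟨x, hx⟩ else f₂ ⟨x, hmem₂ x hx⟩, ?_, ?_⟩
  · funext p
    exact dif_pos p.2
  · funext p
    by_cases hp : (p : F) ∈ S₁
    · exact (dif_pos hp).trans (hagree _ hp p.2)
    · exact dif_neg hp

def extensionEnergies {F : Type*} (En : (F → ℝ) → (F → ℝ) → ℝ) (Dom : Set (F → ℝ))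
    (A : Set F) (g : A → ℝ) : Set ℝ :=
  {e : ℝ | ∃ f ∈ Dom, A.restrict f = g ∧ En f f = e}

lemma traceEnergy_eq_sInf {F : Type*} (En : (F → ℝ) → (F → ℝ) → ℝ) (Dom : Set (F → ℝ))
    (A : Set F) (g : A → ℝ) :
    traceEnergy En Dom A g = sInf (extensionEnergies En Dom A g) :=
  rfl

/-- Two extensions of `g` to `S₁` and `S₂` agree on `S₁ ∩ S₂ ⊆ A`, so they glue. -/
lemma extensionEnergies_glue {F : Type*} {S₁ S₂ : Set F} (hUnion : S₁ ∪ S₂ = Set.univ)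
    {En₁ : (S₁ → ℝ) → (S₁ → ℝ) → ℝ} {Dom₁ : Set (S₁ → ℝ)}
    {En₂ : (S₂ → ℝ) → (S₂ → ℝ) → ℝ} {Dom₂ : Set (S₂ → ℝ)}
    {En : (F → ℝ) → (F → ℝ) → ℝ} {Dom : Set (F → ℝ)}
    (hDom : Dom = {f : F → ℝ | S₁.restrict f ∈ Dom₁ ∧ S₂.restrict f ∈ Dom₂})
    (hEn : ∀ f g : F → ℝ,
      En f g = En₁ (S₁.restrict f) (S₁.restrict g) + En₂ (S₂.restrict f) (S₂.restrict g))
    {A : Set F} (hsub : S₁ ∩ S₂ ⊆ A) (g : A → ℝ) :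
    extensionEnergies En Dom A g =
      extensionEnergies En₁ Dom₁ {s : S₁ | (s : F) ∈ A} (fun p => g ⟨p.1, p.2⟩) +
        extensionEnergies En₂ Dom₂ {s : S₂ | (s : F) ∈ A} (fun p => g ⟨p.1, p.2⟩) := by
  subst hDom
  ext e
  constructor
  · rintro ⟨f, ⟨hf₁, hf₂⟩, hfg, rfl⟩
    exact ⟨_, ⟨S₁.restrict f, hf₁, funext fun p => congrFun hfg ⟨p.1, p.2⟩, rfl⟩,
      _, ⟨S₂.restrict f, hf₂, funext fun p => congrFun hfg ⟨p.1, p.2⟩, rfl⟩, (hEn f f).symm⟩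
  · rintro ⟨_, ⟨f₁, hf₁, hfg₁, rfl⟩, _, ⟨f₂, hf₂, hfg₂, rfl⟩, rfl⟩
    have hagree : ∀ x (hx₁ : x ∈ S₁) (hx₂ : x ∈ S₂), f₁ ⟨x, hx₁⟩ = f₂ ⟨x, hx₂⟩ :=
      fun x hx₁ hx₂ => (congrFun hfg₁ ⟨⟨x, hx₁⟩, hsub ⟨hx₁, hx₂⟩⟩).trans
        (congrFun hfg₂ ⟨⟨x, hx₂⟩, hsub ⟨hx₁, hx₂⟩⟩).symm
    obtain ⟨f, rfl, rfl⟩ := exists_restrict_eq_of_union_eq_univ hUnion f₁ f₂ hagree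
    refine ⟨f, ⟨hf₁, hf₂⟩, funext fun q => ?_, (hEn f f)⟩
    rcases Set.eq_univ_iff_forall.mp hUnion q with hq | hq
    · exact congrFun hfg₁ ⟨⟨q, hq⟩, q.2⟩
    · exact congrFun hfg₂ ⟨⟨q, hq⟩, q.2⟩

namespace IsResistanceForm

variable {G : Type*} {En : (G → ℝ) → (G → ℝ) → ℝ} {Dom : Set (G → ℝ)}

def toSubmodule (h : IsResistanceForm G En Dom) : Submodule ℝ (G → ℝ) where
  carrier := Dom
  add_mem' := fun hf hg => h.add_mem hf hg
  zero_mem' := h.const_mem 0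
  smul_mem' := fun c _ hf => h.smul_mem c hf

lemma unitClip_mem (h : IsResistanceForm G En Dom) {f : G → ℝ} (hf : f ∈ Dom) :
    unitClip f ∈ Dom :=
  (h.markov hf).1

lemma exists_bump_of_ne (h : IsResistanceForm G En Dom) {x y : G} (hxy : x ≠ y) :
    ∃ f ∈ Dom, f x = 1 ∧ f y = 0 ∧ ∀ z, f z ∈ Set.Icc (0 : ℝ) 1 := by
  obtain ⟨φ, hφ, hφxy⟩ := h.separates hxy
  have hψ : (φ x - φ y)⁻¹ • (φ - fun _ => φ y) ∈ Dom :=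
    h.toSubmodule.smul_mem _ (h.toSubmodule.sub_mem hφ (h.const_mem _))
  set ψ := (φ x - φ y)⁻¹ • (φ - fun _ => φ y)
  have hψx : ψ x = 1 := by
    simp [ψ, inv_mul_cancel₀ (sub_ne_zero.mpr hφxy)]
  have hψy : ψ y = 0 := by simp [ψ]
  refine ⟨unitClip ψ, h.unitClip_mem hψ, ?_, ?_, unitClip_apply_mem_Icc ψ⟩
  · rw [unitClip_apply_of_mem_Icc (by simp [hψx]), hψx]
  · rw [unitClip_apply_of_nonpos hψy.le]

/-- Each step `f ↦ ((f + φ - 1) ∨ 0) ∧ 1`, with `φ` a two-point bump, keeps `f x = 1` and makes `f`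
vanish at one more point. -/
lemma exists_bump_vanishing_on (h : IsResistanceForm G En Dom) (x : G) (s : Finset G)
    (hx : x ∉ s) :
    ∃ f ∈ Dom, f x = 1 ∧ (∀ y ∈ s, f y = 0) ∧ ∀ z, f z ∈ Set.Icc (0 : ℝ) 1 := by
  induction s using Finset.induction_on with
  | empty =>
    exact ⟨fun _ => 1, h.const_mem 1, rfl, by simp, fun _ => by simp⟩
  | insert y s _ ih =>
    obtain ⟨hxy, hxs⟩ : x ≠ y ∧ x ∉ s := by simpa [not_or] using hx
    obtain ⟨f, hf, hfx, hfs, hf01⟩ := ih hxs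
    obtain ⟨φ, hφ, hφx, hφy, hφ01⟩ := h.exists_bump_of_ne hxy
    have hp : f + φ - (fun _ => 1) ∈ Dom :=
      h.toSubmodule.sub_mem (h.toSubmodule.add_mem hf hφ) (h.const_mem 1)
    refine ⟨unitClip (f + φ - fun _ => 1), h.unitClip_mem hp, ?_, ?_,
      unitClip_apply_mem_Icc _⟩
    · rw [unitClip_apply_of_mem_Icc] <;> simp [hfx, hφx]
    · intro z hz
      apply unitClip_apply_of_nonpos
      rcases Finset.mem_insert.mp hz with rfl | hz
      · simp [hφy, (hf01 z).2]
      · simp [hfs z hz, (hφ01 z).2]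

lemma exists_mem_restrict_eq (h : IsResistanceForm G En Dom) {A : Set G} (hA : A.Finite)
    (g : A → ℝ) : ∃ f ∈ Dom, A.restrict f = g := by
  have : Fintype A := hA.fintype
  choose b hb hbx hbA using fun a : A => h.exists_bump_vanishing_on a (hA.toFinset.erase a)
    (Finset.notMem_erase _ _)
  refine ⟨∑ a : A, g a • b a, h.toSubmodule.sum_mem fun a _ => h.toSubmodule.smul_mem _ (hb a),
    funext fun y => ?_⟩
  change (∑ a : A, g a • b a) y = g y
  rw [Finset.sum_apply, Finset.sum_eq_single y]
  · simp [hbx y]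
  · intro a _ hay
    have hya : (y : G) ≠ a := fun e => hay (Subtype.ext e).symm
    simp [(hbA a).1 y (Finset.mem_erase.mpr ⟨hya, hA.mem_toFinset.mpr y.2⟩)]
  · simp

lemma extensionEnergies_nonempty (h : IsResistanceForm G En Dom) {A : Set G}
    (hA : A.Finite) (g : A → ℝ) : (extensionEnergies En Dom A g).Nonempty :=
  let ⟨f, hf, hfg⟩ := h.exists_mem_restrict_eq hA g
  ⟨En f f, f, hf, hfg, rfl⟩

lemma bddBelow_extensionEnergies (h : IsResistanceForm G En Dom) (A : Set G) (g : A → ℝ) :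
    BddBelow (extensionEnergies En Dom A g) :=
  ⟨0, by rintro _ ⟨f, hf, -, rfl⟩; exact h.nonneg hf⟩

end IsResistanceForm

theorem trace_energy_glue_general {F : Type*} (S₁ S₂ : Set F)
    (hUnion : S₁ ∪ S₂ = Set.univ)
    (En₁ : (↥S₁ → ℝ) → (↥S₁ → ℝ) → ℝ) (Dom₁ : Set (↥S₁ → ℝ))
    (En₂ : (↥S₂ → ℝ) → (↥S₂ → ℝ) → ℝ) (Dom₂ : Set (↥S₂ → ℝ))
    (h₁ : IsResistanceForm ↥S₁ En₁ Dom₁)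
    (h₂ : IsResistanceForm ↥S₂ En₂ Dom₂)
    (En : (F → ℝ) → (F → ℝ) → ℝ) (Dom : Set (F → ℝ))
    (hDom : Dom = {f : F → ℝ | S₁.restrict f ∈ Dom₁ ∧ S₂.restrict f ∈ Dom₂})
    (hEn : ∀ f g : F → ℝ,
      En f g = En₁ (S₁.restrict f) (S₁.restrict g) + En₂ (S₂.restrict f) (S₂.restrict g))
    (A : Set F) (hAfin : A.Finite) (hsub : S₁ ∩ S₂ ⊆ A) :
    ∀ g : ↥A → ℝ,
      traceEnergy En Dom A g =
        traceEnergy En₁ Dom₁ {s : ↥S₁ | (s : F) ∈ A}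
          (fun p => g ⟨(p.1 : F), p.2⟩) +
        traceEnergy En₂ Dom₂ {s : ↥S₂ | (s : F) ∈ A}
          (fun p => g ⟨(p.1 : F), p.2⟩) := by
  intro g
  have hA₁ : {s : S₁ | (s : F) ∈ A}.Finite := hAfin.preimage Subtype.val_injective.injOn
  have hA₂ : {s : S₂ | (s : F) ∈ A}.Finite := hAfin.preimage Subtype.val_injective.injOn
  simp only [traceEnergy_eq_sInf]
  rw [extensionEnergies_glue hUnion hDom hEn hsub g]
  exact csInf_add (h₁.extensionEnergies_nonempty hA₁ _) (h₁.bddBelow_extensionEnergies _ _)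
    (h₂.extensionEnergies_nonempty hA₂ _) (h₂.bddBelow_extensionEnergies _ _)

/-- Let `F₁, F₂` have a nonempty finite intersection, with resistance forms `(En_i, Dom_i)` on
each, and let `(En, Dom)` be the glued resistance form on `F₁ ∪ F₂`.  For every finite set `A`
containing `F₁ ∩ F₂`, and every `g : A → ℝ`, the trace energies satisfy
`En|_A(g,g) = En₁|_{A ∩ F₁}(g,g) + En₂|_{A ∩ F₂}(g,g)`. -/
theorem trace_energy_glue {F : Type*} (S₁ S₂ : Set F)
    (hUnion : S₁ ∪ S₂ = Set.univ)
    (hFin : (S₁ ∩ S₂).Finite) (hNe : (S₁ ∩ S₂).Nonempty)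
    (En₁ : (↥S₁ → ℝ) → (↥S₁ → ℝ) → ℝ) (Dom₁ : Set (↥S₁ → ℝ))
    (En₂ : (↥S₂ → ℝ) → (↥S₂ → ℝ) → ℝ) (Dom₂ : Set (↥S₂ → ℝ))
    (h₁ : IsResistanceForm ↥S₁ En₁ Dom₁)
    (h₂ : IsResistanceForm ↥S₂ En₂ Dom₂)
    (En : (F → ℝ) → (F → ℝ) → ℝ) (Dom : Set (F → ℝ))
    (hDom : Dom = {f : F → ℝ | S₁.restrict f ∈ Dom₁ ∧ S₂.restrict f ∈ Dom₂})
    (hEn : ∀ f g : F → ℝ,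
      En f g = En₁ (S₁.restrict f) (S₁.restrict g) + En₂ (S₂.restrict f) (S₂.restrict g))
    (A : Set F) (hAfin : A.Finite) (hsub : S₁ ∩ S₂ ⊆ A) :
    ∀ g : ↥A → ℝ,
      traceEnergy En Dom A g =
        traceEnergy En₁ Dom₁ {s : ↥S₁ | (s : F) ∈ A}
          (fun p => g ⟨(p.1 : F), p.2⟩) +
        traceEnergy En₂ Dom₂ {s : ↥S₂ | (s : F) ∈ A}
          (fun p => g ⟨(p.1 : F), p.2⟩) :=
  trace_energy_glue_general S₁ S₂ hUnion En₁ Dom₁ En₂ Dom₂ h₁ h₂ En Dom hDom hEn A hAfin hsub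
end

section
/- Let F₁, F₂ be two nonempty sets such that F₁ ∩ F₂ is a nonempty finite set. For i = 1, 2, let (E_i, 𝓕_i) be a resistance form on F_i, and let (E, 𝓕) be the resistance form on F₁ ∪ F₂ given by 𝓕 = {f : f|_{F₁} ∈ 𝓕₁, f|_{F₂} ∈ 𝓕₂} and E(f,f) = E₁(f|_{F₁}, f|_{F₁}) + E₂(f|_{F₂}, f|_{F₂}). Let A ⊆ F₁ ∪ F₂ be a finite set containing F₁ ∩ F₂. Suppose f ∈ 𝓕 minimizes E(g,g) over all g ∈ 𝓕 with g|_A = f|_A. Then for i = 1, 2, the restriction f|_{F_i} minimizes E_i(h,h) over all h ∈ 𝓕_i with h|_{A ∩ F_i} = f|_{A ∩ F_i}. -/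
open scoped Classical

/-!
Energy is local: the glued energy of `g` is the sum of the energies of `g|_{F₁}` and
`g|_{F₂}`. Given a competitor `h` for `f|_{F₁}`, extend it by `f` off `F₁`. Since `h` agrees
with `f` on `A ⊇ F₁ ∩ F₂`, the extension is a competitor for `f` with the same `F₂`-part, so
minimality of `f` leaves only the `F₁`-energies to compare.
-/

namespace Set

variable {F α : Type*}

@[simp]
theorem domRestrict_extend_val (S : Set F) (h : S → α) (f : F → α) :
    S.domRestrict (Function.extend Subtype.val h f) = h :=
  funext <| Subtype.val_injective.extend_apply h f

theorem domRestrict_extend_val_of_eqOn {S B : Set F} {h : S → α} {f : F → α}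
    (hagree : ∀ s : S, (s : F) ∈ B → h s = f s) :
    B.domRestrict (Function.extend Subtype.val h f) = B.domRestrict f := by
  funext b
  by_cases hb : (b : F) ∈ S
  · simpa [Subtype.val_injective.extend_apply h f ⟨b, hb⟩] using hagree ⟨b, hb⟩ b.2
  · exact Function.extend_apply' h f b fun ⟨s, hs⟩ => hb (hs ▸ s.2)

variable {M : Type*} [AddCommMonoid M] [PartialOrder M] [IsOrderedCancelAddMonoid M]

theorem domRestrict_le_of_add_le {S T A : Set F} (hST : S ∩ T ⊆ A)
    (eS : (S → α) → M) (eT : (T → α) → M) (DS : Set (S → α)) (DT : Set (T → α))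
    {f : F → α} (hfT : T.domRestrict f ∈ DT)
    (hmin : ∀ g : F → α, S.domRestrict g ∈ DS → T.domRestrict g ∈ DT →
      A.domRestrict g = A.domRestrict f →
      eS (S.domRestrict f) + eT (T.domRestrict f) ≤ eS (S.domRestrict g) + eT (T.domRestrict g))
    (h : S → α) (hh : h ∈ DS) (hagree : ∀ s : S, (s : F) ∈ A → h s = f s) :
    eS (S.domRestrict f) ≤ eS h := by
  set g := Function.extend Subtype.val h f
  have hT : T.domRestrict g = T.domRestrict f :=
    domRestrict_extend_val_of_eqOn fun s hs => hagree s (hST ⟨s.2, hs⟩)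
  have hA : A.domRestrict g = A.domRestrict f := domRestrict_extend_val_of_eqOn hagree
  have := hmin g (by rwa [domRestrict_extend_val]) (by rwa [hT]) hA
  rw [domRestrict_extend_val, hT] at this
  exact le_of_add_le_add_right this

end Set

theorem harmonic_restriction_glue_general {F : Type*} (S₁ S₂ : Set F)
    (En₁ : (↥S₁ → ℝ) → (↥S₁ → ℝ) → ℝ) (Dom₁ : Set (↥S₁ → ℝ))
    (En₂ : (↥S₂ → ℝ) → (↥S₂ → ℝ) → ℝ) (Dom₂ : Set (↥S₂ → ℝ))
    (En : (F → ℝ) → (F → ℝ) → ℝ) (Dom : Set (F → ℝ))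
    (hDom : Dom = {f : F → ℝ | S₁.restrict f ∈ Dom₁ ∧ S₂.restrict f ∈ Dom₂})
    (hEn : ∀ f g : F → ℝ,
      En f g = En₁ (S₁.restrict f) (S₁.restrict g) + En₂ (S₂.restrict f) (S₂.restrict g))
    (A : Set F) (hsub : S₁ ∩ S₂ ⊆ A)
    (f : F → ℝ) (hf : f ∈ Dom)
    (hmin : ∀ g ∈ Dom, A.restrict g = A.restrict f → En f f ≤ En g g) :
    (∀ h ∈ Dom₁, (∀ s : ↥S₁, (s : F) ∈ A → h s = f s) →
      En₁ (S₁.restrict f) (S₁.restrict f) ≤ En₁ h h) ∧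
    (∀ h ∈ Dom₂, (∀ s : ↥S₂, (s : F) ∈ A → h s = f s) →
      En₂ (S₂.restrict f) (S₂.restrict f) ≤ En₂ h h) := by
  subst hDom
  have hmin' : ∀ g : F → ℝ, S₁.domRestrict g ∈ Dom₁ → S₂.domRestrict g ∈ Dom₂ →
      A.domRestrict g = A.domRestrict f →
      En₁ (S₁.domRestrict f) (S₁.domRestrict f) + En₂ (S₂.domRestrict f) (S₂.domRestrict f) ≤
        En₁ (S₁.domRestrict g) (S₁.domRestrict g) + En₂ (S₂.domRestrict g) (S₂.domRestrict g) :=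
    fun g hg₁ hg₂ hgA => by
      have := hmin g ⟨hg₁, hg₂⟩ hgA
      rwa [hEn, hEn] at this
  constructor
  · exact Set.domRestrict_le_of_add_le hsub (fun h => En₁ h h) (fun h => En₂ h h) Dom₁ Dom₂
      hf.2 hmin'
  · refine Set.domRestrict_le_of_add_le (Set.inter_comm S₁ S₂ ▸ hsub) (fun h => En₂ h h)
      (fun h => En₁ h h) Dom₂ Dom₁ hf.1 fun g hg₂ hg₁ hgA => ?_
    simpa only [add_comm] using hmin' g hg₁ hg₂ hgA

/-- Let `(En, Dom)` be the glued resistance form on `F₁ ∪ F₂` of resistance forms on `F₁, F₂`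
with nonempty finite intersection, and let `A ⊇ F₁ ∩ F₂` be finite.  If `f ∈ Dom` minimizes the
energy among all elements of `Dom` with the same restriction to `A`, then `f|_{F_i}` minimizes
`En_i` among all elements of `Dom_i` with the same restriction to `A ∩ F_i`, for `i = 1, 2`. -/
theorem harmonic_restriction_glue {F : Type*} (S₁ S₂ : Set F)
    (hUnion : S₁ ∪ S₂ = Set.univ)
    (hFin : (S₁ ∩ S₂).Finite) (hNe : (S₁ ∩ S₂).Nonempty)
    (En₁ : (↥S₁ → ℝ) → (↥S₁ → ℝ) → ℝ) (Dom₁ : Set (↥S₁ → ℝ))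
    (En₂ : (↥S₂ → ℝ) → (↥S₂ → ℝ) → ℝ) (Dom₂ : Set (↥S₂ → ℝ))
    (h₁ : IsResistanceForm ↥S₁ En₁ Dom₁)
    (h₂ : IsResistanceForm ↥S₂ En₂ Dom₂)
    (En : (F → ℝ) → (F → ℝ) → ℝ) (Dom : Set (F → ℝ))
    (hDom : Dom = {f : F → ℝ | S₁.restrict f ∈ Dom₁ ∧ S₂.restrict f ∈ Dom₂})
    (hEn : ∀ f g : F → ℝ,
      En f g = En₁ (S₁.restrict f) (S₁.restrict g) + En₂ (S₂.restrict f) (S₂.restrict g))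
    (A : Set F) (hAfin : A.Finite) (hsub : S₁ ∩ S₂ ⊆ A)
    (f : F → ℝ) (hf : f ∈ Dom)
    (hmin : ∀ g ∈ Dom, A.restrict g = A.restrict f → En f f ≤ En g g) :
    (∀ h ∈ Dom₁, (∀ s : ↥S₁, (s : F) ∈ A → h s = f s) →
      En₁ (S₁.restrict f) (S₁.restrict f) ≤ En₁ h h) ∧
    (∀ h ∈ Dom₂, (∀ s : ↥S₂, (s : F) ∈ A → h s = f s) →
      En₂ (S₂.restrict f) (S₂.restrict f) ≤ En₂ h h) :=
  harmonic_restriction_glue_general S₁ S₂ En₁ Dom₁ En₂ Dom₂ En Dom hDom hEn A hsub f hf hmin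
end

section
/- Let (E, 𝓕) be a resistance form on a nonempty set F and let B ⊆ F be a nonempty finite subset. Then every function g : B → ℝ admits an extension in 𝓕, i.e., there exists f ∈ 𝓕 with f|_B = g. (In the notation of traces, 𝓕|_B consists of all real-valued functions on B.) -/
open scoped Classical

/-!
Normalising a function that separates `x ≠ y` and truncating it to `[0, 1]` gives `f ∈ Dom`
with `f x = 1`, `f y = 0`. The Markov property also makes `Dom` closed under `min` of
`[0, 1]`-valued functions, because then `min f g = f - ((f - g) ∨ 0) ∧ 1`. Taking the minimum
over the finitely many other points of `B` gives, for each `b ∈ B`, a function equal to the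
indicator of `b` on `B`, and linear combinations of these realise every `g : B → ℝ`.
-/

namespace IsResistanceForm

variable {F : Type*} {En : (F → ℝ) → (F → ℝ) → ℝ} {Dom : Set (F → ℝ)}

def domain (hrf : IsResistanceForm F En Dom) : Submodule ℝ (F → ℝ) where
  carrier := Dom
  add_mem' hf hg := hrf.add_mem hf hg
  zero_mem' := hrf.const_mem 0
  smul_mem' := hrf.smul_mem

theorem truncate_mem (hrf : IsResistanceForm F En Dom) {f : F → ℝ} (hf : f ∈ Dom) :
    (fun t => min (max (f t) 0) 1) ∈ Dom :=
  (hrf.markov hf).1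

theorem inf_mem (hrf : IsResistanceForm F En Dom) {f g : F → ℝ} (hf : f ∈ Dom) (hg : g ∈ Dom)
    (hf_le : ∀ t, f t ≤ 1) (hg_nonneg : ∀ t, 0 ≤ g t) : f ⊓ g ∈ Dom := by
  have hfg : f - g ∈ Dom := hrf.domain.sub_mem hf hg
  have hinf : f ⊓ g = f - fun t => min (max ((f - g) t) 0) 1 := by
    funext t
    simp only [Pi.inf_apply, Pi.sub_apply]
    rcases le_total (f t) (g t) with h | h
    · rw [min_eq_left h, max_eq_right (by linarith), min_eq_left zero_le_one, sub_zero]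
    · rw [min_eq_right h, max_eq_left (by linarith),
        min_eq_left (by linarith [hf_le t, hg_nonneg t])]
      ring
  rw [hinf]
  exact hrf.domain.sub_mem hf (hrf.truncate_mem hfg)

theorem exists_mem_eq_one_eq_zero (hrf : IsResistanceForm F En Dom) {x y : F} (hxy : x ≠ y) :
    ∃ f ∈ Dom, f x = 1 ∧ f y = 0 ∧ ∀ t, f t ∈ Set.Icc 0 1 := by
  obtain ⟨h, hh, hne⟩ := hrf.separates hxy
  set f : F → ℝ := (h x - h y)⁻¹ • (h - fun _ => h y)
  have hf : f ∈ Dom := hrf.domain.smul_mem _ (hrf.domain.sub_mem hh (hrf.const_mem _))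
  have hfx : f x = 1 := by
    simp only [f, Pi.smul_apply, Pi.sub_apply, smul_eq_mul]
    exact inv_mul_cancel₀ (sub_ne_zero.mpr hne)
  have hfy : f y = 0 := by simp [f]
  refine ⟨_, hrf.truncate_mem hf, ?_, ?_, fun t => ⟨?_, min_le_right _ _⟩⟩
  · simp [hfx]
  · simp [hfy]
  · exact le_min (le_max_right _ _) zero_le_one

theorem exists_mem_eq_one_eqOn_zero (hrf : IsResistanceForm F En Dom) (s : Finset F) {x : F}
    (hx : x ∉ s) : ∃ f ∈ Dom, f x = 1 ∧ (∀ y ∈ s, f y = 0) ∧ ∀ t, f t ∈ Set.Icc 0 1 := by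
  induction s using Finset.induction_on with
  | empty => exact ⟨fun _ => 1, hrf.const_mem 1, rfl, by simp, fun _ => by simp⟩
  | insert a s ha ih =>
    rw [Finset.mem_insert, not_or] at hx
    obtain ⟨f, hf, hfx, hfs, hf01⟩ := ih hx.2
    obtain ⟨g, hg, hgx, hga, hg01⟩ := hrf.exists_mem_eq_one_eq_zero hx.1
    refine ⟨f ⊓ g, hrf.inf_mem hf hg (fun t => (hf01 t).2) (fun t => (hg01 t).1), ?_, ?_, ?_⟩
    · simp [hfx, hgx]
    · intro y hy
      rcases Finset.mem_insert.mp hy with rfl | hy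
      · simp [hga, (hf01 y).1]
      · simp [hfs y hy, (hg01 y).1]
    · exact fun t => ⟨le_min (hf01 t).1 (hg01 t).1, (min_le_left _ _).trans (hf01 t).2⟩

end IsResistanceForm

theorem trace_domain_full_general {F : Type*}
    (En : (F → ℝ) → (F → ℝ) → ℝ) (Dom : Set (F → ℝ))
    (hrf : IsResistanceForm F En Dom)
    (B : Set F) (hBfin : B.Finite) :
    ∀ g : ↥B → ℝ, ∃ f ∈ Dom, B.restrict f = g := by
  have hbump : ∀ b : B, ∃ e ∈ Dom, e b = 1 ∧ ∀ y ∈ B, y ≠ b → e y = 0 := by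
    intro b
    obtain ⟨e, he, heb, he0, -⟩ :=
      hrf.exists_mem_eq_one_eqOn_zero (hBfin.toFinset.erase b) (Finset.notMem_erase _ _)
    exact ⟨e, he, heb, fun y hy hyb => he0 y (by simp [hyb, hy])⟩
  choose e he he_self he_ne using hbump
  have := hBfin.fintype
  intro g
  refine ⟨∑ b, g b • e b, hrf.domain.sum_mem fun b _ => hrf.domain.smul_mem _ (he b), ?_⟩
  funext a
  change (∑ b, g b • e b) a = g a
  rw [Finset.sum_apply, Finset.sum_eq_single a]
  · simp [he_self]
  · intro b _ hba
    simp [he_ne b a a.2 (fun h => hba (Subtype.ext h.symm))]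
  · simp

/-- For a resistance form `(En, Dom)` on `F` and a nonempty finite subset `B ⊆ F`, every
function `g : B → ℝ` extends to an element of `Dom`; i.e. `Dom|_B` is all of `B → ℝ`. -/
theorem trace_domain_full {F : Type*}
    (En : (F → ℝ) → (F → ℝ) → ℝ) (Dom : Set (F → ℝ))
    (hrf : IsResistanceForm F En Dom)
    (B : Set F) (hBfin : B.Finite) (hBne : B.Nonempty) :
    ∀ g : ↥B → ℝ, ∃ f ∈ Dom, B.restrict f = g :=
  trace_domain_full_general En Dom hrf B hBfin
end
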